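/- arXiv:2505.20490 — 10 statements merged into one kernel-verified Lean document; each statement's English description precedes it below -/
import Mathlib

section
/- Let X be a Polish space with at least two points, let I be an ideal on ω, and let ν := 1_{I⁺} be the {0,1}-valued diffuse submeasure with ν(A) = 1 if and only if A is I-positive. Then the following are equivalent: (i) ν satisfies condition (♦); (ii) I is meager (as a subset of the Cantor space 2^ω); (iii) the set Σ_ν(X) of ν-maldistributed sequences is comeager in X^ω. -/
open Set

/-- `I` is an ideal on `ω = ℕ`: it contains all finite sets, is closed under taking
subsets and finite unions, and `ω ∉ I`. -/
def IsIdealOmega (I : Set (Set ℕ)) : Prop :=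
  (∀ F : Set ℕ, F.Finite → F ∈ I) ∧
  (∀ A B : Set ℕ, A ⊆ B → B ∈ I → A ∈ I) ∧
  (∀ A B : Set ℕ, A ∈ I → B ∈ I → A ∪ B ∈ I) ∧
  (Set.univ : Set ℕ) ∉ I

/-- `I` is meager as a subset of the Cantor space `2^ω`, where `P(ω)` is identified
with `ℕ → Bool` (the product of discrete two-point spaces) via characteristic functions. -/
def IdealMeager (I : Set (Set ℕ)) : Prop :=
  IsMeagre {f : ℕ → Bool | {n : ℕ | f n = true} ∈ I}

open Classical in
/-- The `{0,1}`-valued map `1_{I⁺}`: value `1` exactly on `I`-positive sets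
(i.e. sets not in `I`), value `0` on members of `I`. -/
noncomputable def nuInd (I : Set (Set ℕ)) : Set ℕ → ℝ :=
  fun A => if A ∈ I then 0 else 1

/-- Condition (♦): for every `α ∈ (0,1)` there is `g_α : ω → ω` such that for every
`A ⊆ ω` with `ν(ω \ A) ≤ 1 - α` there is `n_{α,A}` with `A ∩ [n, n + g_α n] ≠ ∅`
for all `n ≥ n_{α,A}`. -/
def CondDiamond (ν : Set ℕ → ℝ) : Prop :=
  ∀ α : ℝ, α ∈ Set.Ioo (0 : ℝ) 1 →
    ∃ g : ℕ → ℕ, ∀ A : Set ℕ, ν (Set.univ \ A) ≤ 1 - α →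
      ∃ N : ℕ, ∀ n : ℕ, N ≤ n → (A ∩ Set.Icc n (n + g n)).Nonempty

/-- `x` is `ν`-maldistributed: `ν {n | x n ∈ U} = 1` for every nonempty open `U`. -/
def Maldistributed {X : Type*} [TopologicalSpace X] (ν : Set ℕ → ℝ) (x : ℕ → X) : Prop :=
  ∀ U : Set X, IsOpen U → U.Nonempty → ν {n : ℕ | x n ∈ U} = 1

/-- `η` is an `I`-cluster point of the sequence `x`: the set `{n | x n ∈ U}` is
`I`-positive for every open neighborhood `U` of `η`. -/
def IdealClusterPt {X : Type*} [TopologicalSpace X] (I : Set (Set ℕ)) (x : ℕ → X)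
    (η : X) : Prop :=
  ∀ U : Set X, IsOpen U → η ∈ U → {n : ℕ | x n ∈ U} ∉ I

open Topology Metric Filter

/-- The combinatorial core of condition (♦) for `nuInd I`. -/
def DCore (I : Set (Set ℕ)) (g : ℕ → ℕ) : Prop :=
  ∀ A : Set ℕ, Aᶜ ∈ I → ∃ N, ∀ n, N ≤ n → (A ∩ Set.Icc n (n + g n)).Nonempty

lemma diamond_iff {I : Set (Set ℕ)} :
    CondDiamond (nuInd I) ↔ ∃ g : ℕ → ℕ, DCore I g := by
  constructor
  · intro h
    obtain ⟨g, hg⟩ := h (1/2) (by norm_num)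
    refine ⟨g, fun A hA => hg A ?_⟩
    rw [show Set.univ \ A = Aᶜ from (Set.compl_eq_univ_diff A).symm]
    simp only [nuInd, if_pos hA]
    norm_num
  · rintro ⟨g, hg⟩ α hα
    refine ⟨g, fun A hA => hg A ?_⟩
    rw [show Set.univ \ A = Aᶜ from (Set.compl_eq_univ_diff A).symm] at hA
    by_contra hc
    simp only [nuInd, if_neg hc] at hA
    linarith [hα.1]

lemma cyl_bool {O : Set (ℕ → Bool)} (hO : IsOpen O) {z : ℕ → Bool} (hz : z ∈ O) :
    ∃ d : ℕ, ∀ f : ℕ → Bool, (∀ i < d, f i = z i) → f ∈ O := by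
  obtain ⟨J, u, h1, h2⟩ := isOpen_pi_iff.1 hO z hz
  refine ⟨(J.sup id) + 1, fun f hf => h2 (Set.mem_pi.mpr fun i hi => ?_)⟩
  have hid : i ≤ J.sup id := Finset.le_sup (f := id) hi
  rw [hf i (by omega)]
  exact (h1 i (by simpa using hi)).2

lemma partA {I : Set (Set ℕ)} (hI : IsIdealOmega I) {g : ℕ → ℕ} (hg : DCore I g) :
    IdealMeager I := by
  classical
  set C : ℕ → Set (ℕ → Bool) :=
    fun N => {f | ∀ n, N ≤ n → ∃ j, j ∈ Set.Icc n (n + g n) ∧ f j = false} with hC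
  have hclosed : ∀ N, IsClosed (C N) := by
    intro N
    have : C N = ⋂ n, ⋂ (_ : N ≤ n), ⋃ j ∈ Set.Icc n (n + g n), {f : ℕ → Bool | f j = false} := by
      ext f; simp [hC]
    rw [this]
    refine isClosed_iInter fun n => isClosed_iInter fun _ =>
      (Set.finite_Icc _ _).isClosed_biUnion fun j _ => ?_
    have : IsClosed ((fun f : ℕ → Bool => f j) ⁻¹' {false}) :=
      IsClosed.preimage (continuous_apply j) isClosed_singleton
    exact this
  have hdense : ∀ N, Dense (C N)ᶜ := by
    intro N f
    have hseq : Filter.Tendsto (fun m => (fun i => if i < m then f i else true))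
        Filter.atTop (𝓝 f) := by
      rw [tendsto_pi_nhds]
      intro i
      refine Filter.Tendsto.congr' ?_ tendsto_const_nhds
      filter_upwards [Filter.eventually_ge_atTop (i+1)] with m hm
      simp [show i < m by omega]
    refine mem_closure_of_tendsto hseq (Filter.Eventually.of_forall fun m => ?_)
    intro hmem
    obtain ⟨j, hj1, hj2⟩ := hmem (max N m) (le_max_left _ _)
    have hjm : ¬ j < m := by
      have := hj1.1
      have := le_max_right N m
      omega
    simp [hjm] at hj2
  have hsub : {f : ℕ → Bool | {n | f n = true} ∈ I} ⊆ ⋃ N, C N := by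
    intro f hf
    obtain ⟨N, hN⟩ := hg {n | f n = true}ᶜ (by rwa [compl_compl])
    refine Set.mem_iUnion.mpr ⟨N, fun n hn => ?_⟩
    obtain ⟨j, hj⟩ := hN n hn
    exact ⟨j, hj.2, by simpa using hj.1⟩
  refine IsMeagre.mono (hs := isMeagre_iUnion fun N => ?_) (hts := hsub)
  exact residual_of_dense_open ((hclosed N).isOpen_compl) (hdense N)

lemma partB {I : Set (Set ℕ)} (hI : IsIdealOmega I) (h : IdealMeager I) : ∃ g : ℕ → ℕ, DCore I g := by
  classical
  obtain ⟨S, hSo, hSd, hSc, hSsub⟩ := mem_residual_iff.1 h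
  have hfalse : (fun _ : ℕ => false) ∈ {f : ℕ → Bool | {n : ℕ | f n = true} ∈ I} := by
    have he : {n : ℕ | (false : Bool) = true} = (∅ : Set ℕ) := by ext n; simp
    simp only [Set.mem_setOf_eq, he]
    exact hI.1 ∅ Set.finite_empty
  have hSne : S.Nonempty := by
    rcases Set.eq_empty_or_nonempty S with rfl | h' 
    · exact absurd hfalse (hSsub (by simp))
    · exact h'
  obtain ⟨e, he⟩ := hSc.exists_eq_range hSne
  have hDo : ∀ k, IsOpen (e k) := fun k => hSo _ (by rw [he]; exact Set.mem_range_self k)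
  have hDd : ∀ k, Dense (e k) := fun k => hSd _ (by rw [he]; exact Set.mem_range_self k)
  have hIsub : ∀ f, {n : ℕ | f n = true} ∈ I → ∃ k, f ∉ e k := by
    intro f hf
    by_contra hc
    push_neg at hc
    have : f ∈ ⋂₀ S := by
      intro t ht
      rw [he] at ht; obtain ⟨k, rfl⟩ := ht
      exact hc k
    exact (hSsub this) hf
  -- the increasing dense open sets
  set W : ℕ → Set (ℕ → Bool) := fun k => ⋂ j ∈ Finset.range (k+1), e j with hW
  have hWo : ∀ k, IsOpen (W k) := fun k => isOpen_biInter_finset fun j _ => hDo j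
  have hWd : ∀ k, Dense (W k) := by
    intro k
    induction k with
    | zero => simpa [hW] using hDd 0
    | succ k ih =>
        have hins : W (k+1) = e (k+1) ∩ W k := by
          simp only [hW]
          rw [Finset.range_add_one, Finset.set_biInter_insert]
        rw [hins]
        exact (hDd (k+1)).inter_of_isOpen_left ih (hDo (k+1))
  have hWanti : ∀ k j, j ≤ k → W k ⊆ e j := by
    intro k j hj
    exact Set.biInter_subset_of_mem (Finset.mem_range.mpr (Nat.lt_succ_of_le hj))
  -- extension of patterns avoiding (W k)ᶜ
  have avoid : ∀ (k m : ℕ) (σ : ℕ → Bool), ∃ d, ∃ τ : ℕ → Bool,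
      ∀ f : ℕ → Bool, (∀ i < m, f i = σ i) → (∀ i, m ≤ i → i < d → f i = τ i) → f ∈ W k := by
    intro k m σ
    have hcylopen : IsOpen {f : ℕ → Bool | ∀ i < m, f i = σ i} := by
      have : {f : ℕ → Bool | ∀ i < m, f i = σ i}
          = ⋂ i ∈ Finset.range m, (fun f : ℕ → Bool => f i) ⁻¹' {σ i} := by
        ext f; simp [Finset.mem_range]
      rw [this]
      exact isOpen_biInter_finset fun i _ =>
        (isOpen_discrete _).preimage (continuous_apply i)
    obtain ⟨z, hz1, hz2⟩ := (hWd k).exists_mem_open hcylopen ⟨σ, fun i _ => rfl⟩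
    obtain ⟨d0, hd0⟩ := cyl_bool (hWo k) hz1
    refine ⟨max m d0, z, fun f hf1 hf2 => hd0 f fun i hi => ?_⟩
    rcases lt_or_ge i m with him | him
    · rw [hf1 i him]; exact (hz2 i him).symm
    · exact hf2 i him (lt_of_lt_of_le hi (le_max_right m d0))
  choose dfun tfun hdt using avoid
  -- truncation
  set trunc : ℕ → (ℕ → Bool) → (ℕ → Bool) := fun m f i => if i < m then f i else false with htrunc
  have trunc_congr : ∀ (m : ℕ) (f f' : ℕ → Bool), (∀ i < m, f i = f' i) →
      trunc m f = trunc m f' := by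
    intro m f f' hf
    funext i
    simp only [htrunc]
    split_ifs with h
    · exact hf i h
    · rfl
  -- the interval endpoints
  set mseq : ℕ → ℕ := fun k => Nat.rec 0 (fun k mk => max (mk + 1)
    (Finset.sup (Finset.univ : Finset (Fin mk → Bool))
      (fun σ => dfun k mk (trunc mk (fun i => if h : i < mk then σ ⟨i, h⟩ else false))))) k
    with hmseq
  have hmseq_succ : ∀ k, mseq (k+1) = max (mseq k + 1)
      (Finset.sup (Finset.univ : Finset (Fin (mseq k) → Bool))
        (fun σ => dfun k (mseq k)
          (trunc (mseq k) (fun i => if h : i < mseq k then σ ⟨i, h⟩ else false)))) := by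
    intro k; rfl
  have hmono : StrictMono mseq := by
    refine strictMono_nat_of_lt_succ fun k => ?_
    rw [hmseq_succ k]
    exact lt_of_lt_of_le (Nat.lt_succ_self _) (le_max_left _ _)
  have hmle : ∀ k, k ≤ mseq k := fun k => by
    simpa using hmono.le_apply (x := k)
  have hdbound : ∀ (k : ℕ) (f : ℕ → Bool),
      dfun k (mseq k) (trunc (mseq k) f) ≤ mseq (k+1) := by
    intro k f
    rw [hmseq_succ k]
    have key : ∃ σ : Fin (mseq k) → Bool, trunc (mseq k) f
        = trunc (mseq k) (fun i => if h : i < mseq k then σ ⟨i, h⟩ else false) :=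
      ⟨fun i => f i, trunc_congr _ _ _ (fun i hi => by simp [hi])⟩
    obtain ⟨σ, hσ⟩ := key
    rw [hσ]
    exact le_max_of_le_right (Finset.le_sup
      (f := fun σ : Fin (mseq k) → Bool => dfun k (mseq k)
        (trunc (mseq k) fun i => if h : i < mseq k then σ ⟨i, h⟩ else false))
      (Finset.mem_univ σ))
  -- main claim: every member of I eventually misses an element of each interval
  have claim : ∀ B : Set ℕ, B ∈ I → ∃ K0, ∀ k, K0 ≤ k →
      ∃ j, mseq k ≤ j ∧ j < mseq (k+1) ∧ j ∉ B := by
    intro B hB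
    by_contra hc
    push_neg at hc
    set Kset : Set ℕ := {k | ∀ j, mseq k ≤ j → j < mseq (k+1) → j ∈ B} with hKset
    have hKunb : ∀ K0, ∃ k, K0 ≤ k ∧ k ∈ Kset := by
      intro K0
      obtain ⟨k, hk1, hk2⟩ := hc K0
      exact ⟨k, hk1, fun j hj1 hj2 => hk2 j hj1 hj2⟩
    -- recursive construction of h
    set H : ℕ → ℕ → Bool := fun k => Nat.rec (fun i => decide (i ∈ B))
      (fun k Hk => fun i => if i < mseq k then Hk i
        else if i < mseq (k+1) ∧ k ∈ Kset then tfun k (mseq k) (trunc (mseq k) Hk) i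
        else decide (i ∈ B)) k with hH
    have hHsucc : ∀ k i, H (k+1) i = if i < mseq k then H k i
        else if i < mseq (k+1) ∧ k ∈ Kset then tfun k (mseq k) (trunc (mseq k) (H k)) i
        else decide (i ∈ B) := fun k i => rfl
    have stab : ∀ (i l l' : ℕ), l ≤ l' → i < mseq l → H l' i = H l i := by
      intro i l l'
      induction l' with
      | zero => intro hll hi; have hl0 : l = 0 := by omega
                subst hl0; rfl
      | succ l' ih =>
          intro hll hi
          rcases Nat.lt_or_ge l (l'+1) with hlt | hge
          · have hl : l ≤ l' := by omega
            rw [hHsucc l' i, if_pos (lt_of_lt_of_le hi (hmono.le_iff_le.mpr hl))]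
            exact ih hl hi
          · have : l = l' + 1 := by omega
            subst this; rfl
    set hh : ℕ → Bool := fun i => H (i+1) i with hhh
    have hh_eq : ∀ l i, i < mseq l → hh i = H l i := by
      intro l i hi
      rcases le_total (i+1) l with h1 | h1
      · exact (stab i (i+1) l h1 (lt_of_lt_of_le (Nat.lt_succ_self i) (hmle (i+1)))).symm
      · exact stab i l (i+1) h1 hi
    have hsubB : ∀ i, hh i = true → i ∈ B := by
      have : ∀ l i, H l i = true → i ∈ B := by
        intro l
        induction l with
        | zero => intro i hi; exact of_decide_eq_true hi
        | succ l ih =>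
            intro i hi
            rw [hHsucc l i] at hi
            by_cases h1 : i < mseq l
            · rw [if_pos h1] at hi; exact ih i hi
            · rw [if_neg h1] at hi
              by_cases h2 : i < mseq (l+1) ∧ l ∈ Kset
              · exact h2.2 i (by omega) h2.1
              · rw [if_neg h2] at hi; exact of_decide_eq_true hi
      exact fun i hi => this (i+1) i hi
    have hnotin : ∀ k ∈ Kset, hh ∈ W k := by
      intro k hk
      refine hdt k (mseq k) (trunc (mseq k) (H k)) hh ?_ ?_
      · intro i hi
        rw [hh_eq k i hi]
        simp [htrunc, hi]
      · intro i hi1 hi2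
        have hi3 : i < mseq (k+1) := lt_of_lt_of_le hi2 (hdbound k (H k))
        rw [hh_eq (k+1) i hi3, hHsucc k i, if_neg (by omega), if_pos ⟨hi3, hk⟩]
    have hmem : {n : ℕ | hh n = true} ∈ I := hI.2.1 _ B (fun i hi => hsubB i hi) hB
    obtain ⟨k0, hk0⟩ := hIsub hh hmem
    obtain ⟨k, hk1, hk2⟩ := hKunb k0
    exact hk0 (hWanti k k0 hk1 (hnotin k hk2))
  -- conclude
  refine ⟨fun n => mseq (n+1), fun A hA => ?_⟩
  obtain ⟨K0, hK0⟩ := claim Aᶜ hA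
  refine ⟨mseq K0, fun n hn => ?_⟩
  show (A ∩ Set.Icc n (n + mseq (n + 1))).Nonempty
  have hex : ∃ k, n ≤ mseq k := ⟨n, hmle n⟩
  obtain ⟨k, hk1, hkmin⟩ : ∃ k, n ≤ mseq k ∧ ∀ k' < k, ¬ n ≤ mseq k' :=
    ⟨Nat.find hex, Nat.find_spec hex, fun k' hk' => Nat.find_min hex hk'⟩
  have hkK0 : K0 ≤ k := by
    by_contra hcon
    push_neg at hcon
    have := hmono hcon
    omega
  obtain ⟨j, hj1, hj2, hj3⟩ := hK0 k hkK0
  have hkn : k ≤ n := by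
    rcases k with _ | t
    · omega
    · have h1 := hkmin t (Nat.lt_succ_self t)
      have h2 := hmle t
      omega
  have hle : mseq (k+1) ≤ mseq (n+1) := hmono.monotone (show k+1 ≤ n+1 by omega)
  exact ⟨j, ⟨by simpa using hj3, Set.mem_Icc.mpr ⟨by omega, by omega⟩⟩⟩

lemma partC {X : Type*} [TopologicalSpace X] [SecondCountableTopology X]
    {I : Set (Set ℕ)} (hI : IsIdealOmega I) {g : ℕ → ℕ} (hg : DCore I g) :
    {x : ℕ → X | Maldistributed (nuInd I) x} ∈ residual (ℕ → X) := by
  classical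
  obtain ⟨b, hbc, hbne, hbasis⟩ := TopologicalSpace.exists_countable_basis X
  have hres : ∀ U : Set X, IsOpen U → U.Nonempty →
      {x : ℕ → X | {n : ℕ | x n ∈ U} ∉ I} ∈ residual (ℕ → X) := by
    intro U hU hUne
    obtain ⟨u0, hu0⟩ := hUne
    set T : ℕ → Set (ℕ → X) :=
      fun N => {x | ∀ n, N ≤ n → ∃ j, j ∈ Set.Icc n (n + g n) ∧ x j ∉ U} with hT
    have hclosed : ∀ N, IsClosed (T N) := by
      intro N
      have : T N = ⋂ n, ⋂ (_ : N ≤ n), ⋃ j ∈ Set.Icc n (n + g n),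
          (fun x : ℕ → X => x j) ⁻¹' Uᶜ := by
        ext x; simp [hT]
      rw [this]
      exact isClosed_iInter fun n => isClosed_iInter fun _ =>
        (Set.finite_Icc _ _).isClosed_biUnion fun j _ =>
          (hU.isClosed_compl).preimage (continuous_apply j)
    have hdense : ∀ N, Dense (T N)ᶜ := by
      intro N x
      have hseq : Filter.Tendsto (fun m => (fun i => if i < m then x i else u0))
          Filter.atTop (𝓝 x) := by
        rw [tendsto_pi_nhds]
        intro i
        refine Filter.Tendsto.congr' ?_ tendsto_const_nhds
        filter_upwards [Filter.eventually_ge_atTop (i+1)] with m hm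
        simp [show i < m by omega]
      refine mem_closure_of_tendsto hseq (Filter.Eventually.of_forall fun m => ?_)
      intro hmem
      obtain ⟨j, hj1, hj2⟩ := hmem (max N m) (le_max_left _ _)
      have hjm : ¬ j < m := by
        have := hj1.1
        have := le_max_right N m
        omega
      simp only [if_neg hjm] at hj2
      exact hj2 hu0
    have hsub : {x : ℕ → X | {n : ℕ | x n ∈ U} ∈ I} ⊆ ⋃ N, T N := by
      intro x hx
      obtain ⟨N, hN⟩ := hg {n | x n ∈ U}ᶜ (by rwa [compl_compl])
      refine Set.mem_iUnion.mpr ⟨N, fun n hn => ?_⟩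
      obtain ⟨j, hj⟩ := hN n hn
      exact ⟨j, hj.2, hj.1⟩
    have hmeagre : IsMeagre {x : ℕ → X | {n : ℕ | x n ∈ U} ∈ I} :=
      IsMeagre.mono (hs := isMeagre_iUnion fun N =>
        residual_of_dense_open ((hclosed N).isOpen_compl) (hdense N)) (hts := hsub)
    have heq : {x : ℕ → X | {n : ℕ | x n ∈ U} ∉ I}
        = {x : ℕ → X | {n : ℕ | x n ∈ U} ∈ I}ᶜ := by
      ext x; simp
    rw [heq]
    exact hmeagre
  have hsub2 : (⋂ U ∈ b, {x : ℕ → X | {n : ℕ | x n ∈ U} ∉ I}) ⊆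
      {x : ℕ → X | Maldistributed (nuInd I) x} := by
    intro x hx U hU hUne
    obtain ⟨u0, hu0⟩ := hUne
    obtain ⟨V, hVb, hu0V, hVU⟩ := hbasis.exists_subset_of_mem_open hu0 hU
    have hV : {n : ℕ | x n ∈ V} ∉ I := Set.mem_iInter₂.1 hx V hVb
    have hUI : {n : ℕ | x n ∈ U} ∉ I := fun hmem =>
      hV (hI.2.1 _ _ (fun n hn => hVU hn) hmem)
    simp [nuInd, hUI]
  refine Filter.mem_of_superset ?_ hsub2
  refine (countable_bInter_mem hbc).mpr fun U hU => ?_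
  exact hres U (hbasis.isOpen hU)
    (Set.nonempty_iff_ne_empty.mpr (fun h => hbne (h ▸ hU)))

lemma fusion {X : Type*} [MetricSpace X] [CompleteSpace X]
    (a : X) (U : Set X) (hU : IsOpen U) (haU : a ∈ U)
    (D : ℕ → Set (ℕ → X)) (hDo : ∀ k, IsOpen (D k)) (hDd : ∀ k, Dense (D k)) :
    ∃ g : ℕ → ℕ, ∀ A : Set ℕ,
      (∀ N, ∃ n, N ≤ n ∧ A ∩ Set.Icc n (n + g n) = ∅) →
      ∃ x : ℕ → X, (∀ k, x ∈ D k) ∧ ∀ j ∈ A, x j ∈ U := by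
  classical
  -- the one-step extension
  have ext0 : ∀ (m : ℕ) (c : ℕ → X) (r : ℕ → ℝ) (k n : ℕ),
      ∃ (m' : ℕ) (c' : ℕ → X) (r' : ℕ → ℝ), n < m' ∧
      ((∀ j < m, 0 < r j) → m ≤ n →
        ((∀ j < m', 0 < r' j ∧ r' j ≤ (1/2 : ℝ)^k) ∧
         (∀ j < m, Metric.closedBall (c' j) (r' j) ⊆ Metric.ball (c j) (r j)) ∧
         (∀ j, m ≤ j → j < n → Metric.closedBall (c' j) (r' j) ⊆ U) ∧
         (∀ x : ℕ → X, (∀ j < m', dist (x j) (c' j) < r' j) → x ∈ D k))) := by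
    intro m c r k n
    by_cases hyp : (∀ j < m, 0 < r j) ∧ m ≤ n
    case neg =>
      exact ⟨n+1, c, r, Nat.lt_succ_self n, fun h1 h2 => absurd ⟨h1, h2⟩ hyp⟩
    case pos =>
    obtain ⟨hr, hmn⟩ := hyp
    set O : Set (ℕ → X) := ⋂ j ∈ Finset.range n,
      (fun x : ℕ → X => x j) ⁻¹' (if j < m then Metric.ball (c j) (r j) else U) with hO
    have hOopen : IsOpen O := isOpen_biInter_finset fun j _ => by
      refine IsOpen.preimage (continuous_apply j) ?_
      split_ifs
      · exact Metric.isOpen_ball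
      · exact hU
    have hOne : O.Nonempty := by
      refine ⟨fun j => if j < m then c j else a, ?_⟩
      rw [hO]
      refine Set.mem_iInter₂.2 fun j _ => ?_
      by_cases hj : j < m <;> simp [hj, Metric.mem_ball, hr j, haU]
    obtain ⟨z, hz1, hz2⟩ := (hDd k).exists_mem_open hOopen hOne
    obtain ⟨J, u, h1, h2⟩ := isOpen_pi_iff.1 (hDo k) z hz1
    have hεex : ∀ j : ℕ, ∃ ε : ℝ, 0 < ε ∧ (j ∈ J → Metric.ball (z j) ε ⊆ u j) := by
      intro j
      by_cases hj : j ∈ J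
      · obtain ⟨ε, hε1, hε2⟩ := Metric.isOpen_iff.1 (h1 j hj).1 (z j) (h1 j hj).2
        exact ⟨ε, hε1, fun _ => hε2⟩
      · exact ⟨1, one_pos, fun h => absurd h hj⟩
    choose ε hε1 hε2 using hεex
    have hzO : ∀ j < n, z j ∈ (if j < m then Metric.ball (c j) (r j) else U) := by
      intro j hj
      exact Set.mem_iInter₂.1 hz2 j (Finset.mem_range.mpr hj)
    have hρex : ∀ j : ℕ, ∃ ρ : ℝ, 0 < ρ ∧ ρ ≤ (1/2 : ℝ)^k ∧ ρ ≤ ε j ∧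
        (j < m → Metric.closedBall (z j) ρ ⊆ Metric.ball (c j) (r j)) ∧
        (m ≤ j → j < n → Metric.closedBall (z j) ρ ⊆ U) := by
      intro j
      by_cases hjn : j < n
      · have hz3 := hzO j hjn
        by_cases hjm : j < m
        · rw [if_pos hjm] at hz3
          obtain ⟨ρ1, hρ1, hball⟩ := Metric.nhds_basis_closedBall.mem_iff.1
            ((Metric.isOpen_ball).mem_nhds hz3)
          refine ⟨min ρ1 (min ((1/2:ℝ)^k) (ε j)), lt_min hρ1 (lt_min (by positivity) (hε1 j)),
            le_trans (min_le_right _ _) (min_le_left _ _),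
            le_trans (min_le_right _ _) (min_le_right _ _),
            fun _ => Subset.trans (Metric.closedBall_subset_closedBall (min_le_left _ _)) hball,
            fun hmj _ => absurd hmj (by omega)⟩
        · rw [if_neg hjm] at hz3
          obtain ⟨ρ1, hρ1, hball⟩ := Metric.nhds_basis_closedBall.mem_iff.1 (hU.mem_nhds hz3)
          refine ⟨min ρ1 (min ((1/2:ℝ)^k) (ε j)), lt_min hρ1 (lt_min (by positivity) (hε1 j)),
            le_trans (min_le_right _ _) (min_le_left _ _),
            le_trans (min_le_right _ _) (min_le_right _ _),
            fun hjm' => absurd hjm' hjm,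
            fun _ _ => Subset.trans (Metric.closedBall_subset_closedBall (min_le_left _ _)) hball⟩
      · refine ⟨min ((1/2:ℝ)^k) (ε j), lt_min (by positivity) (hε1 j), min_le_left _ _,
          min_le_right _ _,
          fun hjm => absurd (lt_of_lt_of_le hjm hmn) hjn, fun _ hjn' => absurd hjn' hjn⟩
    choose ρ hρ0 hρk hρε hρm hρU using hρex
    refine ⟨max (n+1) ((J.sup id)+1), z, ρ,
      lt_of_lt_of_le (Nat.lt_succ_self n) (le_max_left _ _), fun _ _ => ⟨?_, ?_, ?_, ?_⟩⟩
    · exact fun j _ => ⟨hρ0 j, hρk j⟩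
    · exact fun j hj => hρm j hj
    · exact fun j hj1 hj2 => hρU j hj1 hj2
    · intro x hx
      refine h2 (Set.mem_pi.2 fun i hi => ?_)
      have hiJ : i ∈ J := by simpa using hi
      have hilt : i < max (n+1) ((J.sup id)+1) := by
        have : i ≤ J.sup id := Finset.le_sup (f := id) hiJ
        have := le_max_right (n+1) ((J.sup id)+1)
        omega
      have : dist (x i) (z i) < ε i := lt_of_lt_of_le (hx i hilt) (hρε i)
      exact hε2 i hiJ (Metric.mem_ball.mpr this)
  choose em ec er hlt hspec using ext0
  -- the deterministic run over gap-histories, and the function g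
  set step : (ℕ × (ℕ → X) × (ℕ → ℝ)) → ℕ → ℕ → (ℕ × (ℕ → X) × (ℕ → ℝ)) :=
    fun p k n => (em p.1 p.2.1 p.2.2 k n, ec p.1 p.2.1 p.2.2 k n, er p.1 p.2.1 p.2.2 k n)
    with hstepdef
  set p0 : ℕ × (ℕ → X) × (ℕ → ℝ) := (0, fun _ => a, fun _ => 1) with hp0
  set run : ∀ k : ℕ, (Fin k → ℕ) → ℕ × (ℕ → X) × (ℕ → ℝ) := fun k =>
    Nat.rec (motive := fun k => (Fin k → ℕ) → ℕ × (ℕ → X) × (ℕ → ℝ))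
      (fun _ => p0)
      (fun k ih η => step (ih (fun i => η i.castSucc)) k (η (Fin.last k))) k with hrun
  have hrun_succ : ∀ (k : ℕ) (η : Fin (k+1) → ℕ),
      run (k+1) η = step (run k (fun i => η i.castSucc)) k (η (Fin.last k)) := fun k η => rfl
  set g : ℕ → ℕ := fun n => Finset.sup (Finset.range (n+1)) (fun k =>
    Finset.sup (Finset.univ : Finset (Fin k → Fin n))
      (fun η => (step (run k (fun i => (η i : ℕ))) k n).1 - n)) with hgdef
  refine ⟨g, fun A hA => ?_⟩
  choose nf hnf1 hnf2 using hA
  -- the recursive construction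
  set q : ℕ → (ℕ × (ℕ → X) × (ℕ → ℝ)) × ℕ := fun k =>
    Nat.rec ((p0, nf 0))
      (fun k qk => (step qk.1 k qk.2,
        nf (max (step qk.1 k qk.2).1 (max (k+1) (qk.2 + 1))))) k with hq
  set p : ℕ → ℕ × (ℕ → X) × (ℕ → ℝ) := fun k => (q k).1 with hpdef
  set nn : ℕ → ℕ := fun k => (q k).2 with hnndef
  set m : ℕ → ℕ := fun k => (p k).1 with hmdef
  set cc : ℕ → ℕ → X := fun k => (p k).2.1 with hccdef
  set rr : ℕ → ℕ → ℝ := fun k => (p k).2.2 with hrrdef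
  have hp_succ : ∀ k, p (k+1) = step (p k) k (nn k) := fun k => rfl
  have hm0 : m 0 = 0 := rfl
  have hnn_succ : ∀ k, nn (k+1) = nf (max (m (k+1)) (max (k+1) (nn k + 1))) := fun k => rfl
  have hmn : ∀ k, m k ≤ nn k := by
    intro k
    cases k with
    | zero => exact Nat.zero_le _
    | succ k =>
        rw [hnn_succ k]
        exact le_trans (le_max_left _ _) (hnf1 _)
  have hkn : ∀ k, k ≤ nn k := by
    intro k
    cases k with
    | zero => exact Nat.zero_le _
    | succ k =>
        rw [hnn_succ k]
        exact le_trans (le_trans (le_max_left _ _) (le_max_right _ _)) (hnf1 _)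
  have hnlt : ∀ k, nn k < nn (k+1) := by
    intro k
    rw [hnn_succ k]
    have := hnf1 (max (m (k+1)) (max (k+1) (nn k + 1)))
    have h2 : nn k + 1 ≤ max (m (k+1)) (max (k+1) (nn k + 1)) :=
      le_trans (le_max_right _ _) (le_max_right _ _)
    omega
  have hnmono : StrictMono nn := strictMono_nat_of_lt_succ hnlt
  have hgapk : ∀ k, A ∩ Set.Icc (nn k) (nn k + g (nn k)) = ∅ := by
    intro k
    cases k with
    | zero => exact hnf2 0
    | succ k => rw [hnn_succ k]; exact hnf2 _
  have hprun : ∀ k, p k = run k (fun i : Fin k => nn i) := by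
    intro k
    induction k with
    | zero => rfl
    | succ k ih =>
        have h4 := hrun_succ k (fun i : Fin (k+1) => nn i)
        simp only [Fin.coe_castSucc, Fin.val_last] at h4
        rw [hp_succ k, ih]
        exact h4.symm
  have hstep_lt : ∀ pp k n, n < (step pp k n).1 := fun pp k n => hlt _ _ _ _ _
  have hgbound : ∀ k, m (k+1) ≤ nn k + g (nn k) := by
    intro k
    have hkn' : k ≤ nn k := hkn k
    have hηlt : ∀ i : Fin k, nn i < nn k := fun i => hnmono i.2
    set η : Fin k → Fin (nn k) := fun i => ⟨nn i, hηlt i⟩ with hη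
    have h1 : (step (run k (fun i => ((η i : ℕ)))) k (nn k)).1 - nn k ≤ g (nn k) := by
      rw [hgdef]
      refine le_trans (Finset.le_sup (f := fun η : Fin k → Fin (nn k) =>
        (step (run k (fun i => (η i : ℕ))) k (nn k)).1 - nn k) (Finset.mem_univ η)) ?_
      exact Finset.le_sup (f := fun k' => Finset.univ.sup fun η : Fin k' → Fin (nn k) =>
        (step (run k' fun i => (η i : ℕ)) k' (nn k)).1 - nn k)
        (Finset.mem_range.mpr (Nat.lt_succ_of_le hkn'))
    have h2 : (fun i : Fin k => ((η i : ℕ))) = fun i : Fin k => nn i := rfl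
    rw [h2, ← hprun k] at h1
    have h3 := hstep_lt (p k) k (nn k)
    rw [← hp_succ k] at h1 h3
    have h1' : m (k+1) - nn k ≤ g (nn k) := h1
    have h3' : nn k < m (k+1) := h3
    omega
  -- the inductive good property and the step specification
  have hgood : ∀ k, ∀ j < m k, 0 < rr k j := by
    intro k
    induction k with
    | zero => intro j hj; rw [hm0] at hj; omega
    | succ k ih =>
        intro j hj
        have hs := hspec (m k) (cc k) (rr k) k (nn k) ih (hmn k)
        exact (hs.1 j hj).1
  have hSPEC : ∀ k,
      (∀ j < m (k+1), 0 < rr (k+1) j ∧ rr (k+1) j ≤ (1/2 : ℝ)^k) ∧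
      (∀ j < m k, Metric.closedBall (cc (k+1) j) (rr (k+1) j)
        ⊆ Metric.ball (cc k j) (rr k j)) ∧
      (∀ j, m k ≤ j → j < nn k → Metric.closedBall (cc (k+1) j) (rr (k+1) j) ⊆ U) ∧
      (∀ x : ℕ → X, (∀ j < m (k+1), dist (x j) (cc (k+1) j) < rr (k+1) j) → x ∈ D k) :=
    fun k => hspec (m k) (cc k) (rr k) k (nn k) (hgood k) (hmn k)
  have hmlt : ∀ k, m k < m (k+1) := by
    intro k
    have h3 := hstep_lt (p k) k (nn k)
    rw [← hp_succ k] at h3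
    exact lt_of_le_of_lt (hmn k) h3
  have hmmono : StrictMono m := strictMono_nat_of_lt_succ hmlt
  have hmge : ∀ k, k ≤ m k := fun k => by simpa using hmmono.le_apply (x := k)
  have hchain : ∀ k, ∀ j < m k, Metric.closedBall (cc (k+1) j) (rr (k+1) j)
      ⊆ Metric.closedBall (cc k j) (rr k j) :=
    fun k j hj => Subset.trans ((hSPEC k).2.1 j hj) Metric.ball_subset_closedBall
  have hnest : ∀ k l, k ≤ l → ∀ j < m k, Metric.closedBall (cc l j) (rr l j)
      ⊆ Metric.closedBall (cc k j) (rr k j) := by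
    intro k l hkl
    induction l, hkl using Nat.le_induction with
    | base => exact fun j hj => subset_rfl
    | succ l hl ih =>
        intro j hj
        exact Subset.trans (hchain l j (lt_of_lt_of_le hj (hmmono.monotone hl))) (ih j hj)
  have hcenter : ∀ k l, k ≤ l → ∀ j < m k, cc l j ∈ Metric.closedBall (cc k j) (rr k j) := by
    intro k l hkl j hj
    refine hnest k l hkl j hj ?_
    exact Metric.mem_closedBall_self (le_of_lt (hgood l j (lt_of_lt_of_le hj (hmmono.monotone hkl))))
  -- the limit point
  have hcauchy : ∀ j : ℕ, ∃ y : X,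
      Filter.Tendsto (fun l => cc (l + (j+1)) j) Filter.atTop (𝓝 y) := by
    intro j
    apply cauchySeq_tendsto_of_complete
    rw [Metric.cauchySeq_iff']
    intro εv hε
    obtain ⟨t, ht⟩ := exists_pow_lt_of_lt_one hε (by norm_num : (1/2:ℝ) < 1)
    refine ⟨t+1, fun l hl => ?_⟩
    have hjm : j < m (t+1+(j+1)) := by
      have := hmge (t+1+(j+1)); omega
    have h1 : cc (l + (j+1)) j ∈
        Metric.closedBall (cc (t+1+(j+1)) j) (rr (t+1+(j+1)) j) :=
      hcenter (t+1+(j+1)) (l + (j+1)) (by omega) j hjm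
    have h2 : rr (t+1+(j+1)) j ≤ (1/2 : ℝ)^(t+j+1) := by
      have hjm2 : j < m ((t+j+1)+1) := by
        have h4 : (t+j+1)+1 = t+1+(j+1) := by omega
        rw [h4]; exact hjm
      have := ((hSPEC (t+j+1)).1 j hjm2).2
      have h4 : (t+j+1)+1 = t+1+(j+1) := by omega
      rwa [h4] at this
    have h3 : (1/2 : ℝ)^(t+j+1) ≤ (1/2 : ℝ)^t :=
      pow_le_pow_of_le_one (by norm_num) (by norm_num) (by omega)
    have h5 := Metric.mem_closedBall.1 h1
    calc dist (cc (l + (j+1)) j) (cc (t+1+(j+1)) j) ≤ rr (t+1+(j+1)) j := h5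
      _ ≤ (1/2:ℝ)^(t+j+1) := h2
      _ ≤ (1/2:ℝ)^t := h3
      _ < εv := ht
  choose x hx using hcauchy
  have hxball : ∀ k, ∀ j < m k, x j ∈ Metric.closedBall (cc k j) (rr k j) := by
    intro k j hj
    refine Metric.isClosed_closedBall.mem_of_tendsto (hx j) ?_
    filter_upwards [Filter.eventually_ge_atTop k] with l hl
    exact hcenter k (l + (j+1)) (by omega) j hj
  have hxD : ∀ k, x ∈ D k := by
    intro k
    refine (hSPEC k).2.2.2 x fun j hj => ?_
    have h1 : x j ∈ Metric.closedBall (cc (k+2) j) (rr (k+2) j) :=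
      hxball (k+2) j (lt_trans hj (hmlt (k+1)))
    exact Metric.mem_ball.1 ((hSPEC (k+1)).2.1 j hj h1)
  have hxU : ∀ j ∈ A, x j ∈ U := by
    intro j hjA
    have hex2 : ∃ k, j < m (k+1) := ⟨j, lt_of_lt_of_le (Nat.lt_succ_self j) (hmge (j+1))⟩
    obtain ⟨k0, hk0, hk0min⟩ : ∃ k0, j < m (k0+1) ∧ ∀ k' < k0, ¬ j < m (k'+1) :=
      ⟨Nat.find hex2, Nat.find_spec hex2, fun k' h => Nat.find_min hex2 h⟩
    have hmk0 : m k0 ≤ j := by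
      rcases k0 with _ | t
      · rw [hm0]; omega
      · have := hk0min t (Nat.lt_succ_self t)
        omega
    rcases Nat.lt_or_ge j (nn k0) with hltn | hgen
    · exact (hSPEC k0).2.2.1 j hmk0 hltn (hxball (k0+1) j hk0)
    · exfalso
      have hj2 : j ≤ nn k0 + g (nn k0) := by
        have := hgbound k0
        omega
      have hmem : j ∈ A ∩ Set.Icc (nn k0) (nn k0 + g (nn k0)) :=
        ⟨hjA, Set.mem_Icc.mpr ⟨hgen, hj2⟩⟩
      rw [hgapk k0] at hmem
      exact Set.notMem_empty j hmem
  exact ⟨x, hxD, hxU⟩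

lemma partD {X : Type*} [TopologicalSpace X] [PolishSpace X] [Nontrivial X]
    {I : Set (Set ℕ)} (hI : IsIdealOmega I)
    (h3 : {x : ℕ → X | Maldistributed (nuInd I) x} ∈ residual (ℕ → X)) :
    ∃ g : ℕ → ℕ, DCore I g := by
  classical
  letI := TopologicalSpace.upgradeIsCompletelyMetrizable X
  obtain ⟨S, hSo, hSd, hSc, hSsub⟩ := mem_residual_iff.1 h3
  obtain ⟨D, hDo, hDd, hDsub⟩ : ∃ D : ℕ → Set (ℕ → X), (∀ k, IsOpen (D k)) ∧
      (∀ k, Dense (D k)) ∧ (⋂ k, D k) ⊆ {x : ℕ → X | Maldistributed (nuInd I) x} := by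
    rcases Set.eq_empty_or_nonempty S with rfl | hSne
    · exact ⟨fun _ => Set.univ, fun _ => isOpen_univ, fun _ => dense_univ,
        by simpa using hSsub⟩
    · obtain ⟨e, he⟩ := hSc.exists_eq_range hSne
      refine ⟨e, fun k => hSo _ (by rw [he]; exact Set.mem_range_self k),
        fun k => hSd _ (by rw [he]; exact Set.mem_range_self k), ?_⟩
      refine Set.Subset.trans ?_ hSsub
      intro x hx t ht
      rw [he] at ht
      obtain ⟨k, rfl⟩ := ht
      exact Set.mem_iInter.1 hx k
  obtain ⟨aa, bb, hab⟩ := exists_pair_ne X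
  have hd : (0:ℝ) < dist aa bb := dist_pos.mpr hab
  have hUV : ∀ y, y ∈ Metric.ball aa (dist aa bb / 3) →
      y ∉ Metric.ball bb (dist aa bb / 3) := by
    intro y h1 h2
    rw [Metric.mem_ball] at h1 h2
    have h3' : dist aa bb ≤ dist aa y + dist y bb := dist_triangle aa y bb
    have h4 : dist aa y = dist y aa := dist_comm _ _
    linarith
  obtain ⟨g, hgfus⟩ := fusion aa (Metric.ball aa (dist aa bb / 3)) Metric.isOpen_ball
    (Metric.mem_ball_self (by linarith)) D hDo hDd
  refine ⟨g, fun A hA => ?_⟩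
  by_contra hc
  push_neg at hc
  have hgap : ∀ N, ∃ n, N ≤ n ∧ A ∩ Set.Icc n (n + g n) = ∅ := by
    intro N
    obtain ⟨n, h1, h2⟩ := hc N
    exact ⟨n, h1, h2⟩
  obtain ⟨x, hxD, hxU⟩ := hgfus A hgap
  have hxmal : Maldistributed (nuInd I) x := hDsub (Set.mem_iInter.2 hxD)
  have hmal := hxmal (Metric.ball bb (dist aa bb / 3)) Metric.isOpen_ball
    ⟨bb, Metric.mem_ball_self (by linarith)⟩
  have hnotI : {n : ℕ | x n ∈ Metric.ball bb (dist aa bb / 3)} ∉ I := by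
    intro hmem
    simp only [nuInd, if_pos hmem] at hmal
    exact absurd hmal (by norm_num)
  apply hnotI
  refine hI.2.1 _ Aᶜ (fun n hn hnA => ?_) hA
  exact hUV (x n) (hxU n hnA) hn

/-- For a Polish space `X` with at least two points and an ideal `I` on
`ω`, with `ν := 1_{I⁺}`, the following are equivalent: (i) `ν` satisfies condition (♦);
(ii) `I` is meager in the Cantor space; (iii) the set of `ν`-maldistributed sequences is
comeager in `X^ω`. -/
theorem stmt_0 {X : Type*} [TopologicalSpace X] [PolishSpace X] [Nontrivial X]
    (I : Set (Set ℕ)) (hI : IsIdealOmega I) :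
    List.TFAE [CondDiamond (nuInd I), IdealMeager I,
      {x : ℕ → X | Maldistributed (nuInd I) x} ∈ residual (ℕ → X)] := by
  tfae_have 1 → 2 := by
    intro h1
    obtain ⟨g, hg⟩ := diamond_iff.1 h1
    exact partA hI hg
  tfae_have 2 → 1 := by
    intro h2
    exact diamond_iff.2 (partB hI h2)
  tfae_have 1 → 3 := by
    intro h1
    obtain ⟨g, hg⟩ := diamond_iff.1 h1
    exact partC hI hg
  tfae_have 3 → 1 := by
    intro h3
    exact diamond_iff.2 (partD hI h3)
  tfae_finish
end

section
/- Let X be a separable metric space and let I be a meager ideal on ω. Then the set Σ_ν(X) of ν-maldistributed sequences, where ν := 1_{I⁺}, is comeager in X^ω. -/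
open Set

private lemma cyl_step (U : Set (ℕ → Bool)) (hUo : IsOpen U) (hUd : Dense U)
    (g : ℕ → Bool) (a c : ℕ) (t : Set ℕ) (hac : a ≤ c) (ht : t ⊆ Set.Ico a c) :
    ∃ c' t', c ≤ c' ∧ t' ⊆ Set.Ico a c' ∧ t' ∩ Set.Ico a c = t ∧
      ∀ f : ℕ → Bool, (∀ n, n < a → f n = g n) →
        (∀ n ∈ Set.Ico a c', (f n = true ↔ n ∈ t')) → f ∈ U := by
  classical
  set h₀ : ℕ → Bool := fun n => if n < a then g n else decide (n ∈ t) with hh₀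
  set V : Set (ℕ → Bool) := Set.pi (Set.Iio c) (fun n => {h₀ n}) with hV
  have hVo : IsOpen V := isOpen_set_pi (Set.finite_Iio c) (fun _ _ => isOpen_discrete _)
  have hVne : V.Nonempty := ⟨h₀, fun n _ => rfl⟩
  obtain ⟨h, hhV, hhU⟩ := hUd.inter_open_nonempty V hVo hVne
  have hhV' : ∀ n, n < c → h n = h₀ n := fun n hn => hhV n hn
  obtain ⟨F, u, h1, h2⟩ := isOpen_pi_iff.mp hUo h hhU
  refine ⟨max c (F.sup id + 1), {n | n ∈ Set.Ico a (max c (F.sup id + 1)) ∧ h n = true},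
    le_max_left _ _, fun n hn => hn.1, ?_, ?_⟩
  · ext n
    simp only [Set.mem_inter_iff, Set.mem_setOf_eq, Set.mem_Ico]
    constructor
    · rintro ⟨⟨-, hh⟩, hna, hnc⟩
      have heq := hhV' n hnc
      rw [heq] at hh
      simp only [hh₀, if_neg (not_lt.mpr hna), decide_eq_true_eq] at hh
      exact hh
    · intro hnt
      have hn := ht hnt
      refine ⟨⟨⟨hn.1, lt_of_lt_of_le hn.2 (le_max_left _ _)⟩, ?_⟩, hn.1, hn.2⟩
      rw [hhV' n hn.2]
      simp only [hh₀, if_neg (not_lt.mpr hn.1)]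
      exact decide_eq_true hnt
  · intro f hfa hft
    have hfh : ∀ n, n < max c (F.sup id + 1) → f n = h n := by
      intro n hn
      by_cases hna : n < a
      · rw [hfa n hna, hhV' n (lt_of_lt_of_le hna hac)]
        simp only [hh₀, if_pos hna]
      · have hmem : n ∈ Set.Ico a (max c (F.sup id + 1)) := ⟨not_lt.mp hna, hn⟩
        have := hft n hmem
        simp only [Set.mem_setOf_eq, hmem, true_and] at this
        rw [Bool.eq_iff_iff, this]
    refine h2 (fun i hi => ?_)
    have hiF : i ∈ F := hi
    have : i < max c (F.sup id + 1) :=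
      lt_of_lt_of_le (Nat.lt_succ_of_le (Finset.le_sup (f := id) hiF)) (le_max_right _ _)
    rw [hfh i this]
    exact (h1 i hiF).2

private lemma cyl_finset (U : Set (ℕ → Bool)) (hUo : IsOpen U) (hUd : Dense U)
    (S : Finset (ℕ → Bool)) :
    ∀ (a c : ℕ) (t : Set ℕ), a ≤ c → t ⊆ Set.Ico a c →
    ∃ c' t', c ≤ c' ∧ t' ⊆ Set.Ico a c' ∧ t' ∩ Set.Ico a c = t ∧
      ∀ g ∈ S, ∀ f : ℕ → Bool, (∀ n, n < a → f n = g n) →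
        (∀ n ∈ Set.Ico a c', (f n = true ↔ n ∈ t')) → f ∈ U := by
  classical
  induction S using Finset.induction with
  | empty =>
    intro a c t hac ht
    exact ⟨c, t, le_rfl, ht, Set.inter_eq_left.mpr ht, by simp⟩
  | @insert g S hg ih =>
    intro a c t hac ht
    obtain ⟨c₁, t₁, hc₁, ht₁, hint₁, hmem₁⟩ := ih a c t hac ht
    obtain ⟨c₂, t₂, hc₂, ht₂, hint₂, hmem₂⟩ :=
      cyl_step U hUo hUd g a c₁ t₁ (hac.trans hc₁) ht₁
    refine ⟨c₂, t₂, hc₁.trans hc₂, ht₂, ?_, ?_⟩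
    · calc t₂ ∩ Set.Ico a c = t₂ ∩ (Set.Ico a c₁ ∩ Set.Ico a c) := by
            rw [Set.inter_eq_self_of_subset_right (Set.Ico_subset_Ico_right hc₁)]
        _ = (t₂ ∩ Set.Ico a c₁) ∩ Set.Ico a c := (Set.inter_assoc _ _ _).symm
        _ = t₁ ∩ Set.Ico a c := by rw [hint₂]
        _ = t := hint₁
    · intro g' hg' f hfa hft
      rcases Finset.mem_insert.mp hg' with rfl | hg'S
      · exact hmem₂ f hfa hft
      · refine hmem₁ g' hg'S f hfa (fun n hn => ?_)
        rw [hft n (Set.Ico_subset_Ico_right hc₂ hn)]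
        constructor
        · intro hnt₂
          have : n ∈ t₂ ∩ Set.Ico a c₁ := ⟨hnt₂, hn⟩
          rw [hint₂] at this; exact this
        · intro hnt₁
          have : n ∈ t₂ ∩ Set.Ico a c₁ := hint₂ ▸ hnt₁
          exact this.1

private lemma cyl_main (U : Set (ℕ → Bool)) (hUo : IsOpen U) (hUd : Dense U) (a : ℕ) :
    ∃ b t, a < b ∧ t ⊆ Set.Ico a b ∧
      ∀ f : ℕ → Bool, (∀ n ∈ Set.Ico a b, (f n = true ↔ n ∈ t)) → f ∈ U := by
  classical
  set S : Finset (ℕ → Bool) :=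
    Finset.image (fun v : Fin a → Bool => fun n => if h : n < a then v ⟨n, h⟩ else false)
      Finset.univ with hS
  obtain ⟨c', t', hcc, ht', _, hmem⟩ :=
    cyl_finset U hUo hUd S a a ∅ le_rfl (Set.empty_subset _)
  refine ⟨c' + 1, t', Nat.lt_succ_of_le hcc,
    ht'.trans (Set.Ico_subset_Ico_right (Nat.le_succ _)), ?_⟩
  intro f hf
  have hgS : (fun n => if h : n < a then f n else false) ∈ S := by
    rw [hS]
    exact Finset.mem_image.mpr ⟨fun i => f i.1, Finset.mem_univ _, rfl⟩
  refine hmem _ hgS f (fun n hn => by rw [dif_pos hn]) (fun n hn => ?_)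
  exact hf n ⟨hn.1, lt_of_lt_of_le hn.2 (Nat.le_succ _)⟩
section Tal
variable (I : Set (Set ℕ))

private lemma talagrand (hI : IsIdealOmega I) (hM : IdealMeager I) :
    ∃ e : ℕ → ℕ, StrictMono e ∧
      ∀ A : Set ℕ, (∀ k₀ : ℕ, ∃ k, k₀ ≤ k ∧ Set.Ico (e k) (e (k+1)) ⊆ A) → A ∉ I := by
  classical
  have hM' : {f : ℕ → Bool | {n : ℕ | f n = true} ∈ I}ᶜ ∈ residual (ℕ → Bool) := hM
  obtain ⟨S, hSo, hSd, hSc, hSsub⟩ := mem_residual_iff.mp hM'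
  have hne : (insert Set.univ S).Nonempty := ⟨_, Set.mem_insert _ _⟩
  obtain ⟨U, hU⟩ := (hSc.insert _).exists_eq_range hne
  have hUmem : ∀ j, U j ∈ insert Set.univ S := by
    intro j; rw [hU]; exact Set.mem_range_self j
  have hUo : ∀ j, IsOpen (U j) := by
    intro j; rcases Set.mem_insert_iff.mp (hUmem j) with h | h
    · rw [h]; exact isOpen_univ
    · exact hSo _ h
  have hUd : ∀ j, Dense (U j) := by
    intro j; rcases Set.mem_insert_iff.mp (hUmem j) with h | h
    · rw [h]; exact dense_univ
    · exact hSd _ h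
  set V : ℕ → Set (ℕ → Bool) := fun k => ⋂ j ∈ Finset.range (k+1), U j with hV
  have hVo : ∀ k, IsOpen (V k) := fun k => isOpen_biInter_finset (fun j _ => hUo j)
  have hVd : ∀ k, Dense (V k) := by
    intro k
    induction k with
    | zero => simpa [hV] using hUd 0
    | succ k ih =>
      have : V (k+1) = U (k+1) ∩ V k := by
        rw [hV]; simp only []
        rw [Finset.range_add_one, Finset.set_biInter_insert]
      rw [this]
      exact (hUd (k+1)).inter_of_isOpen_right (by simpa using ih) (hVo k)
  have hVsub : ∀ m k, m ≤ k → V k ⊆ U m := by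
    intro m k hmk x hx
    exact Set.mem_iInter₂.mp hx m (Finset.mem_range.mpr (Nat.lt_succ_of_le hmk))
  have key : ∀ k a, ∃ b t, a < b ∧ t ⊆ Set.Ico a b ∧
      ∀ f : ℕ → Bool, (∀ n ∈ Set.Ico a b, (f n = true ↔ n ∈ t)) → f ∈ V k :=
    fun k a => cyl_main (V k) (hVo k) (hVd k) a
  let step : ℕ → ℕ × Set ℕ → ℕ × Set ℕ := fun k p =>
    ⟨(key k p.1).choose, (key k p.1).choose_spec.choose⟩
  let E : ℕ → ℕ × Set ℕ := fun k => Nat.rec (0, ∅) step k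
  set e : ℕ → ℕ := fun k => (E k).1 with he
  set t : ℕ → Set ℕ := fun k => (E (k+1)).2 with htdef
  have hkey : ∀ k, e k < e (k+1) ∧ t k ⊆ Set.Ico (e k) (e (k+1)) ∧
      ∀ f : ℕ → Bool, (∀ n ∈ Set.Ico (e k) (e (k+1)), (f n = true ↔ n ∈ t k)) → f ∈ V k :=
    fun k => (key k (E k).1).choose_spec.choose_spec
  have hmono : StrictMono e := strictMono_nat_of_lt_succ (fun k => (hkey k).1)
  have huniq : ∀ j k n, n ∈ Set.Ico (e j) (e (j+1)) → n ∈ Set.Ico (e k) (e (k+1)) → j = k := by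
    intro j k n hj hk
    by_contra hjk
    rcases Nat.lt_or_ge j k with h | h
    · exact absurd (le_trans (hmono.monotone (Nat.succ_le_of_lt h)) hk.1) (not_le.mpr hj.2)
    · have h' : k < j := lt_of_le_of_ne h (fun hh => hjk hh.symm)
      exact absurd (le_trans (hmono.monotone (Nat.succ_le_of_lt h')) hj.1) (not_le.mpr hk.2)
  refine ⟨e, hmono, ?_⟩
  intro A hA hAI
  set B : Set ℕ := {n | n ∈ A ∧ ∀ k, n ∈ Set.Ico (e k) (e (k+1)) →
      Set.Ico (e k) (e (k+1)) ⊆ A → n ∈ t k} with hB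
  have hBI : B ∈ I := hI.2.1 B A (fun n hn => hn.1) hAI
  set f : ℕ → Bool := fun n => if n ∈ B then true else false with hf
  have hfB : ∀ n, f n = true ↔ n ∈ B := by
    intro n; by_cases h : n ∈ B <;> simp [hf, h]
  have hfs : f ∈ {f : ℕ → Bool | {n : ℕ | f n = true} ∈ I} := by
    have : {n : ℕ | f n = true} = B := Set.ext hfB
    simpa [this] using hBI
  have hfnotinter : f ∉ ⋂₀ S := fun h => hSsub h hfs
  rw [Set.mem_sInter] at hfnotinter
  push_neg at hfnotinter
  obtain ⟨T, hTS, hfT⟩ := hfnotinter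
  have : T ∈ Set.range U := hU ▸ Set.mem_insert_of_mem _ hTS
  obtain ⟨m, rfl⟩ := this
  obtain ⟨k, hmk, hk⟩ := hA m
  have hfV : f ∈ V k := by
    refine (hkey k).2.2 f (fun n hn => ?_)
    rw [hfB]
    constructor
    · intro hnB; exact hnB.2 k hn hk
    · intro hnt
      refine ⟨hk hn, fun j hnj _ => ?_⟩
      rw [huniq j k n hnj hn]
      exact hnt
  exact hfT (hVsub m k hmk hfV)

end Tal

/-- If `X` is a separable metric space and `I` is a meager ideal on
`ω`, then the set of `1_{I⁺}`-maldistributed sequences is comeager in `X^ω`. -/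
theorem stmt_4 {X : Type*} [MetricSpace X] [TopologicalSpace.SeparableSpace X]
    (I : Set (Set ℕ)) (hI : IsIdealOmega I) (hM : IdealMeager I) :
    {x : ℕ → X | Maldistributed (nuInd I) x} ∈ residual (ℕ → X) := by
  classical
  obtain ⟨e, hmono, htal⟩ := talagrand I hI hM
  rcases isEmpty_or_nonempty X with hX | hX
  · have : {x : ℕ → X | Maldistributed (nuInd I) x} = Set.univ := by
      ext x
      simp only [Set.mem_setOf_eq, Set.mem_univ, iff_true]
      intro U hU hUne
      exact (hX.false hUne.choose).elim
    rw [this]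
    exact Filter.univ_mem
  obtain ⟨s, hsc, hsd⟩ := TopologicalSpace.exists_countable_dense X
  obtain ⟨d, hd⟩ := hsc.exists_eq_range hsd.nonempty
  set G : ℕ × ℕ → Set (ℕ → X) := fun p =>
    {x | {n : ℕ | x n ∈ Metric.ball (d p.1) (1/((p.2 : ℝ)+1))} ∉ I} with hG
  have hGres : ∀ p, G p ∈ residual (ℕ → X) := by
    intro p
    set B := Metric.ball (d p.1) (1/((p.2 : ℝ)+1)) with hB
    have hrpos : (0:ℝ) < 1/((p.2 : ℝ)+1) := by positivity
    have hBne : d p.1 ∈ B := Metric.mem_ball_self hrpos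
    set W : ℕ → Set (ℕ → X) := fun k₀ =>
      ⋃ k, ⋃ (_ : k₀ ≤ k), Set.pi (Set.Ico (e k) (e (k+1))) (fun _ => B) with hW
    have hWo : ∀ k₀, IsOpen (W k₀) := by
      intro k₀
      exact isOpen_iUnion (fun k => isOpen_iUnion (fun _ =>
        isOpen_set_pi (Set.finite_Ico _ _) (fun _ _ => Metric.isOpen_ball)))
    have hWd : ∀ k₀, Dense (W k₀) := by
      intro k₀
      rw [dense_iff_inter_open]
      intro O hOo hOne
      obtain ⟨x, hx⟩ := hOne
      obtain ⟨F, u, h1, h2⟩ := isOpen_pi_iff.mp hOo x hx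
      set k := max k₀ (F.sup id + 1) with hk
      set y : ℕ → X := fun n => if n ∈ F then x n else d p.1 with hy
      have hyO : y ∈ O := by
        refine h2 (fun i hi => ?_)
        have hiF : i ∈ F := hi
        simp only [hy, if_pos hiF]
        exact (h1 i hiF).2
      refine ⟨y, hyO, ?_⟩
      refine Set.mem_iUnion.mpr ⟨k, Set.mem_iUnion.mpr ⟨le_max_left _ _, ?_⟩⟩
      intro n hn
      have hnF : n ∉ F := by
        intro hnF
        have h1' : n ≤ F.sup id := Finset.le_sup (f := id) hnF
        have h2' : n < e k := lt_of_le_of_lt h1'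
          (lt_of_lt_of_le (Nat.lt_succ_self _)
            (le_trans (le_max_right k₀ _) hmono.le_apply))
        exact absurd hn.1 (not_le.mpr h2')
      simp only [hy, if_neg hnF]
      exact hBne
    have hiW : (⋂ k₀, W k₀) ∈ residual (ℕ → X) :=
      countable_iInter_mem.mpr (fun k₀ => residual_of_dense_open (hWo k₀) (hWd k₀))
    refine Filter.mem_of_superset hiW ?_
    intro x hx
    refine htal _ (fun k₀ => ?_)
    obtain ⟨k, hk'⟩ := Set.mem_iUnion.mp (Set.mem_iInter.mp hx k₀)
    obtain ⟨hkk₀, hkpi⟩ := Set.mem_iUnion.mp hk'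
    exact ⟨k, hkk₀, fun n hn => hkpi n hn⟩
  have hGall : (⋂ p : ℕ × ℕ, G p) ∈ residual (ℕ → X) := countable_iInter_mem.mpr hGres
  refine Filter.mem_of_superset hGall ?_
  intro x hx
  simp only [Set.mem_setOf_eq]
  intro U hUo hUne
  obtain ⟨v, hv⟩ := hUne
  obtain ⟨r, hr, hball⟩ := Metric.isOpen_iff.mp hUo v hv
  obtain ⟨m, hm⟩ := exists_nat_one_div_lt (half_pos hr)
  have hrpos : (0:ℝ) < 1/((m : ℝ)+1) := by positivity
  have hdense : (Metric.ball v (1/((m : ℝ)+1)) ∩ s).Nonempty :=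
    hsd.inter_open_nonempty _ Metric.isOpen_ball ⟨v, Metric.mem_ball_self hrpos⟩
  obtain ⟨z, hzb, hzs⟩ := hdense
  rw [hd] at hzs
  obtain ⟨i, rfl⟩ := hzs
  have hsub2 : Metric.ball (d i) (1/((m : ℝ)+1)) ⊆ U := by
    intro w hw
    apply hball
    have h1 : dist w (d i) < 1/((m : ℝ)+1) := Metric.mem_ball.mp hw
    have h2 : dist (d i) v < 1/((m : ℝ)+1) := Metric.mem_ball.mp hzb
    have h3 : (1:ℝ)/((m : ℝ)+1) < r/2 := by exact_mod_cast hm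
    have : dist w v < r := by
      calc dist w v ≤ dist w (d i) + dist (d i) v := dist_triangle _ _ _
        _ < 1/((m : ℝ)+1) + 1/((m : ℝ)+1) := add_lt_add h1 h2
        _ < r := by linarith
    exact this
  have hpos : {n : ℕ | x n ∈ Metric.ball (d i) (1/((m : ℝ)+1))} ∉ I := by
    have := Set.mem_iInter.mp hx (i, m)
    simpa [hG] using this
  have hUpos : {n : ℕ | x n ∈ U} ∉ I := by
    intro h
    exact hpos (hI.2.1 _ _ (fun n hn => hsub2 hn) h)
  show nuInd I _ = 1
  simp only [nuInd]
  rw [if_neg hUpos]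
end

section
/- Let X be a Polish space with at least two points and let I be an ideal on ω. If the set Σ_ν(X) of ν-maldistributed sequences, where ν := 1_{I⁺}, is comeager in X^ω, then I is meager as a subset of the Cantor space 2^ω. -/
open Set

namespace Stmt5Aux

open Metric TopologicalSpace

variable (X : Type*) [MetricSpace X] [SecondCountableTopology X] [Nonempty X]

/-- Coded basic open ball. -/
noncomputable def bs (e : ℕ × ℕ) : Set X :=
  Metric.ball (denseSeq X e.1) (1 / (e.2 + 1))

lemma bs_open (e : ℕ × ℕ) : IsOpen (bs X e) := isOpen_ball

lemma bs_nonempty (e : ℕ × ℕ) : (bs X e).Nonempty := by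
  refine Metric.nonempty_ball.2 ?_
  positivity

/-- The cylinder determined by a finite list of codes. -/
noncomputable def cyl (c : List (ℕ × ℕ)) : Set (ℕ → X) :=
  {x | ∀ t, t < c.length → x t ∈ bs X (c.getD t (0, 0))}

lemma cyl_eq_pi (c : List (ℕ × ℕ)) :
    cyl X c = Set.pi {t : ℕ | t < c.length} (fun t => bs X (c.getD t (0, 0))) := rfl

lemma cyl_open (c : List (ℕ × ℕ)) : IsOpen (cyl X c) := by
  rw [cyl_eq_pi]
  exact isOpen_set_pi (Set.finite_Iio c.length) (fun a _ => bs_open X _)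

lemma cyl_nonempty (c : List (ℕ × ℕ)) : (cyl X c).Nonempty :=
  ⟨fun t => (bs_nonempty X (c.getD t (0, 0))).some,
   fun t _ => (bs_nonempty X (c.getD t (0, 0))).some_mem⟩

/-- Geometric lemma: small coded balls with closure inside a given open set. -/
lemma exists_code {V : Set X} (hV : IsOpen V) {z : X} (hz : z ∈ V) {ε : ℝ} (hε : 0 < ε) :
    ∃ e : ℕ × ℕ, z ∈ bs X e ∧ closure (bs X e) ⊆ V ∧ diam (bs X e) ≤ ε := by
  obtain ⟨s, hs, hball⟩ := Metric.isOpen_iff.1 hV z hz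
  obtain ⟨m, hm⟩ := exists_nat_one_div_lt (lt_min (by linarith : (0:ℝ) < s / 4) (half_pos hε))
  have hmδ : (0:ℝ) < 1 / (m + 1) := by positivity
  obtain ⟨k, hk⟩ := (denseRange_denseSeq X).exists_dist_lt z hmδ
  refine ⟨(k, m), ?_, ?_, ?_⟩
  · simpa [bs, dist_comm] using hk
  · refine (closure_ball_subset_closedBall).trans ?_
    intro y hy
    apply hball
    have h1 : dist y (denseSeq X k) ≤ 1 / (m + 1) := hy
    have h2 : dist z (denseSeq X k) < 1 / (m + 1) := hk
    have h3 : 1 / ((m:ℝ) + 1) < s / 4 := lt_of_lt_of_le hm (min_le_left _ _)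
    have := dist_triangle y (denseSeq X k) z
    rw [mem_ball]
    have h4 : dist (denseSeq X k) z = dist z (denseSeq X k) := dist_comm _ _
    linarith
  · refine (diam_ball hmδ.le).trans ?_
    have h3 : 1 / ((m:ℝ) + 1) < ε / 2 := lt_of_lt_of_le hm (min_le_right _ _)
    linarith

/-- The extension lemma: inside any cylinder, keeping a block of new coordinates in `U`,
one can refine to a small cylinder landing in a given dense open set. -/
lemma ext_lemma (D : Set (ℕ → X)) (hDo : IsOpen D) (hDd : Dense D)
    (U : Set X) (hU : IsOpen U) (hUne : U.Nonempty)
    (c : List (ℕ × ℕ)) (n : ℕ) (hn : c.length ≤ n) {ε : ℝ} (hε : 0 < ε) :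
    ∃ c' : List (ℕ × ℕ), n ≤ c'.length ∧ cyl X c' ⊆ D ∧
      (∀ t, t < c.length → closure (bs X (c'.getD t (0,0))) ⊆ bs X (c.getD t (0,0))) ∧
      (∀ t, c.length ≤ t → t < n → bs X (c'.getD t (0,0)) ⊆ U) ∧
      (∀ t, t < c'.length → diam (bs X (c'.getD t (0,0))) ≤ ε) := by
  classical
  set O : Set (ℕ → X) := cyl X c ∩ Set.pi {t : ℕ | c.length ≤ t ∧ t < n} (fun _ => U) with hO
  have hOopen : IsOpen O := by
    refine (cyl_open X c).inter (isOpen_set_pi ?_ fun a _ => hU)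
    exact (Set.finite_Iio n).subset fun a ha => ha.2
  have hOne : O.Nonempty := by
    refine ⟨fun t => if h : t < c.length then (bs_nonempty X (c.getD t (0,0))).some
      else hUne.some, ?_, ?_⟩
    · intro t ht
      simp only [dif_pos ht]
      exact (bs_nonempty X (c.getD t (0,0))).some_mem
    · intro t ht
      simp only [dif_neg (not_lt.2 ht.1)]
      exact hUne.some_mem
  obtain ⟨y, hyO, hyD⟩ := hDd.inter_open_nonempty O hOopen hOne
  obtain ⟨I, u, hu, hpi⟩ := isOpen_pi_iff.1 hDo y hyD
  set m' : ℕ := max n (I.sup Nat.succ) with hm'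
  have hIm' : ∀ a ∈ I, a < m' := fun a ha =>
    lt_of_lt_of_le (Nat.lt_succ_self a) (le_trans (Finset.le_sup (f := Nat.succ) ha) (le_max_right _ _))
  -- target open sets
  set V : ℕ → Set X := fun t =>
    (if t < c.length then bs X (c.getD t (0,0)) else univ) ∩
    (if c.length ≤ t ∧ t < n then U else univ) ∩
    (if t ∈ I then u t else univ) with hV
  have hVopen : ∀ t, IsOpen (V t) := by
    intro t
    refine IsOpen.inter (IsOpen.inter ?_ ?_) ?_ <;> split_ifs <;>
      first
        | exact bs_open X _
        | exact hU
        | exact (hu _ (by assumption)).1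
        | exact isOpen_univ
  have hyV : ∀ t, y t ∈ V t := by
    intro t
    refine ⟨⟨?_, ?_⟩, ?_⟩ <;> split_ifs with h
    · exact hyO.1 t h
    · trivial
    · exact hyO.2 t h
    · trivial
    · exact (hu t h).2
    · trivial
  have hcode : ∀ t, ∃ e : ℕ × ℕ, y t ∈ bs X e ∧ closure (bs X e) ⊆ V t ∧ diam (bs X e) ≤ ε :=
    fun t => exists_code X (hVopen t) (hyV t) hε
  choose e he1 he2 he3 using hcode
  refine ⟨List.ofFn (fun t : Fin m' => e t), ?_, ?_, ?_, ?_, ?_⟩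
  · rw [List.length_ofFn]
    exact le_max_left n _
  · intro x hx
    apply hpi
    intro a ha
    have haa : a < m' := hIm' a ha
    have : x a ∈ bs X ((List.ofFn (fun t : Fin m' => e t)).getD a (0,0)) :=
      hx a (by simpa using haa)
    rw [show (List.ofFn (fun t : Fin m' => e t)).getD a (0,0) = e a by
      simp [List.getD, List.getElem?_ofFn, haa]] at this
    have h2 := (subset_closure.trans (he2 a)) this
    have h3 := h2.2
    rwa [if_pos (Finset.mem_coe.mp ha)] at h3
  · intro t ht
    have htm : t < m' := lt_of_lt_of_le ht (hn.trans (le_max_left _ _))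
    rw [show (List.ofFn (fun t : Fin m' => e t)).getD t (0,0) = e t by
      simp [List.getD, List.getElem?_ofFn, htm]]
    refine (he2 t).trans ?_
    intro z hz
    have := hz.1.1
    simpa [ht] using this
  · intro t ht1 ht2
    have htm : t < m' := lt_of_lt_of_le ht2 (le_max_left _ _)
    rw [show (List.ofFn (fun t : Fin m' => e t)).getD t (0,0) = e t by
      simp [List.getD, List.getElem?_ofFn, htm]]
    refine subset_closure.trans ((he2 t).trans ?_)
    intro z hz
    have := hz.1.2
    simpa [ht1, ht2, not_lt.2 ht1] using this
  · intro t ht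
    have htm : t < m' := by simpa using ht
    rw [show (List.ofFn (fun t : Fin m' => e t)).getD t (0,0) = e t by
      simp [List.getD, List.getElem?_ofFn, htm]]
    exact he3 t


lemma key [CompleteSpace X]
    (U₀ U₁ : Set X) (hU₀ : IsOpen U₀) (h0ne : U₀.Nonempty)
    (hdisj : Disjoint U₀ U₁)
    (D : ℕ → Set (ℕ → X)) (hDo : ∀ j, IsOpen (D j)) (hDd : ∀ j, Dense (D j)) :
    ∃ g : ℕ → ℕ, ∀ A : Set ℕ, (∀ N, ∃ n, N ≤ n ∧ Set.Icc n (n + g n) ⊆ A) →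
      ∃ x : ℕ → X, (∀ j, x ∈ D j) ∧ {t | x t ∈ U₁} ⊆ A := by
  classical
  have total : ∀ (c : List (ℕ × ℕ)) (j n : ℕ), ∃ c' : List (ℕ × ℕ),
      c.length ≤ n → (n ≤ c'.length ∧ cyl X c' ⊆ D j ∧
        (∀ t, t < c.length → closure (bs X (c'.getD t (0,0))) ⊆ bs X (c.getD t (0,0))) ∧
        (∀ t, c.length ≤ t → t < n → bs X (c'.getD t (0,0)) ⊆ U₀) ∧
        (∀ t, t < c'.length → diam (bs X (c'.getD t (0,0))) ≤ 1 / (j + 1))) := by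
    intro c j n
    by_cases h : c.length ≤ n
    · obtain ⟨c', hc'⟩ := ext_lemma X (D j) (hDo j) (hDd j) U₀ hU₀ h0ne c n h
        (by positivity : (0:ℝ) < 1 / (j+1))
      exact ⟨c', fun _ => hc'⟩
    · exact ⟨[], fun h' => absurd h' h⟩
  choose Φ hΦ using total
  set dec : ℕ → List (ℕ × ℕ) := fun i => (Encodable.decode i).getD [] with hdec
  set g : ℕ → ℕ := fun n =>
    (Finset.range n ×ˢ Finset.range n).sup (fun p => (Φ (dec p.1) p.2 n).length) with hg
  refine ⟨g, ?_⟩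
  intro A hA
  have pickspec : ∀ (c : List (ℕ × ℕ)) (j : ℕ), ∃ n,
      c.length ≤ n ∧ Encodable.encode c < n ∧ j < n ∧ Set.Icc n (n + g n) ⊆ A := by
    intro c j
    obtain ⟨n, hn1, hn2⟩ := hA (max (max c.length (Encodable.encode c + 1)) (j + 1))
    rw [max_le_iff, max_le_iff] at hn1
    exact ⟨n, hn1.1.1, hn1.1.2, hn1.2, hn2⟩
  choose pick hp1 hp2 hp3 hp4 using pickspec
  let cseq : ℕ → List (ℕ × ℕ) := fun j => Nat.rec [] (fun i ci => Φ ci i (pick ci i)) j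
  have hc0 : cseq 0 = [] := rfl
  have hcs : ∀ j, cseq (j+1) = Φ (cseq j) j (pick (cseq j) j) := fun j => rfl
  set nj : ℕ → ℕ := fun j => pick (cseq j) j with hnj
  have H1 : ∀ j, nj j ≤ (cseq (j+1)).length := fun j => (hΦ _ _ _ (hp1 (cseq j) j)).1
  have H2 : ∀ j, cyl X (cseq (j+1)) ⊆ D j := fun j => (hΦ _ _ _ (hp1 (cseq j) j)).2.1
  have H3 : ∀ j t, t < (cseq j).length →
      closure (bs X ((cseq (j+1)).getD t (0,0))) ⊆ bs X ((cseq j).getD t (0,0)) :=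
    fun j => (hΦ _ _ _ (hp1 (cseq j) j)).2.2.1
  have H4 : ∀ j t, (cseq j).length ≤ t → t < nj j →
      bs X ((cseq (j+1)).getD t (0,0)) ⊆ U₀ :=
    fun j => (hΦ _ _ _ (hp1 (cseq j) j)).2.2.2.1
  have H5 : ∀ j t, t < (cseq (j+1)).length →
      diam (bs X ((cseq (j+1)).getD t (0,0))) ≤ 1 / (j + 1) :=
    fun j => (hΦ _ _ _ (hp1 (cseq j) j)).2.2.2.2
  have Hg : ∀ j, (cseq (j+1)).length ≤ g (nj j) := by
    intro j
    have hmem : (Encodable.encode (cseq j), j) ∈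
        Finset.range (nj j) ×ˢ Finset.range (nj j) := by
      rw [Finset.mem_product]
      exact ⟨Finset.mem_range.2 (hp2 (cseq j) j), Finset.mem_range.2 (hp3 (cseq j) j)⟩
    have hle := Finset.le_sup (f := fun p : ℕ × ℕ => (Φ (dec p.1) p.2 (nj j)).length) hmem
    rw [hg]
    simpa [hdec, Encodable.encodek] using hle
  have Hmono : Monotone (fun j => (cseq j).length) :=
    monotone_nat_of_le_succ (fun j => le_trans (hp1 (cseq j) j) (H1 j))
  have Hlt : ∀ j, j < (cseq (j+1)).length := fun j => lt_of_lt_of_le (hp3 (cseq j) j) (H1 j)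
  have Hnest : ∀ j j', j ≤ j' → ∀ t, t < (cseq j).length →
      bs X ((cseq j').getD t (0,0)) ⊆ bs X ((cseq j).getD t (0,0)) := by
    intro j j' hjj'
    induction j', hjj' using Nat.le_induction with
    | base => exact fun t _ => subset_rfl
    | succ j' hjj' ih =>
      intro t ht
      exact (subset_closure.trans (H3 j' t (lt_of_lt_of_le ht (Hmono hjj')))).trans (ih t ht)
  have hwit : ∀ j, ∃ yy : ℕ → X, yy ∈ cyl X (cseq j) := fun j => cyl_nonempty X _
  choose y hy using hwit
  have hmem : ∀ j j', j ≤ j' → ∀ t, t < (cseq j).length →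
      y j' t ∈ bs X ((cseq j).getD t (0,0)) :=
    fun j j' hjj' t ht => Hnest j j' hjj' t ht (hy j' t (lt_of_lt_of_le ht (Hmono hjj')))
  have hcauchy : ∀ t, CauchySeq (fun j => y j t) := by
    intro t
    rw [Metric.cauchySeq_iff]
    intro ε hε
    obtain ⟨k, hk⟩ := exists_nat_one_div_lt hε
    refine ⟨max t k + 1, fun a ha b hb => ?_⟩
    have htJ : t < (cseq (max t k + 1)).length :=
      lt_of_le_of_lt (le_max_left t k) (Hlt (max t k))
    have h1 := hmem (max t k + 1) a ha t htJ
    have h2 := hmem (max t k + 1) b hb t htJ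
    have h3 := H5 (max t k) t htJ
    have h4 : dist (y a t) (y b t) ≤ diam (bs X ((cseq (max t k + 1)).getD t (0,0))) :=
      dist_le_diam_of_mem isBounded_ball h1 h2
    have h5 : (1:ℝ) / (max t k + 1) ≤ 1 / (k + 1) := by
      apply one_div_le_one_div_of_le
      · positivity
      · push_cast
        have := le_max_right t k
        exact_mod_cast by omega
    calc dist (y a t) (y b t) ≤ diam (bs X ((cseq (max t k + 1)).getD t (0,0))) := h4
      _ ≤ 1 / (max t k + 1) := h3
      _ ≤ 1 / (k + 1) := h5
      _ < ε := hk
  have hlim : ∀ t, ∃ a : X, Filter.Tendsto (fun j => y j t) Filter.atTop (nhds a) :=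
    fun t => cauchySeq_tendsto_of_complete (hcauchy t)
  choose x hx using hlim
  have hxc : ∀ j t, t < (cseq j).length → x t ∈ bs X ((cseq j).getD t (0,0)) := by
    intro j t ht
    have h1 : ∀ j' ≥ j+1, y j' t ∈ bs X ((cseq (j+1)).getD t (0,0)) :=
      fun j' hj' => hmem (j+1) j' hj' t (lt_of_lt_of_le ht (Hmono (Nat.le_succ j)))
    have h2 : x t ∈ closure (bs X ((cseq (j+1)).getD t (0,0))) := by
      apply mem_closure_of_tendsto (hx t)
      exact Filter.eventually_atTop.2 ⟨j+1, h1⟩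
    exact H3 j t ht h2
  have hxcyl : ∀ j, x ∈ cyl X (cseq j) := fun j t ht => hxc j t ht
  refine ⟨x, fun j => H2 j (hxcyl (j+1)), ?_⟩
  intro t ht
  have hex : ∃ j, t < (cseq (j+1)).length := ⟨t, Hlt t⟩
  set j := Nat.find hex with hjdef
  have hj1 : t < (cseq (j+1)).length := Nat.find_spec hex
  have hj0 : (cseq j).length ≤ t := by
    rcases Nat.eq_zero_or_pos j with h0 | hpos
    · rw [h0, hc0]
      exact Nat.zero_le t
    · have hmin := Nat.find_min hex (show j - 1 < j from Nat.sub_lt hpos Nat.one_pos)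
      rw [show j - 1 + 1 = j from Nat.succ_pred_eq_of_pos hpos] at hmin
      exact not_lt.1 hmin
  by_cases hcase : t < nj j
  · exfalso
    have hx0 : x t ∈ U₀ := H4 j t hj0 hcase (hxc (j+1) t hj1)
    exact Set.disjoint_left.1 hdisj hx0 ht
  · have h5 : t < g (nj j) := lt_of_lt_of_le hj1 (Hg j)
    have hnjeq : nj j = pick (cseq j) j := rfl
    rw [hnjeq] at h5 hcase
    exact hp4 (cseq j) j (mem_Icc.2 ⟨not_lt.1 hcase, by omega⟩)

end Stmt5Aux

/-- If `X` is a Polish space with at least two points and the set of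
`1_{I⁺}`-maldistributed sequences is comeager in `X^ω`, then `I` is meager. -/
theorem stmt_5 {X : Type*} [TopologicalSpace X] [PolishSpace X] [Nontrivial X]
    (I : Set (Set ℕ)) (hI : IsIdealOmega I)
    (h : {x : ℕ → X | Maldistributed (nuInd I) x} ∈ residual (ℕ → X)) :
    IdealMeager I := by
  classical
  letI := TopologicalSpace.upgradeIsCompletelyMetrizable X
  obtain ⟨p, q, hpq⟩ := exists_pair_ne X
  have hr : 0 < dist p q / 2 := half_pos (dist_pos.2 hpq)
  set U₀ := Metric.ball p (dist p q / 2) with hU₀def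
  set U₁ := Metric.ball q (dist p q / 2) with hU₁def
  have hdisj : Disjoint U₀ U₁ := by
    rw [Set.disjoint_left]
    intro z hz0 hz1
    rw [hU₀def, Metric.mem_ball] at hz0
    rw [hU₁def, Metric.mem_ball] at hz1
    have h1 := dist_triangle p z q
    have h2 : dist p z = dist z p := dist_comm _ _
    linarith
  obtain ⟨S, hSo, hSd, hSc, hSsub⟩ := mem_residual_iff.1 h
  obtain ⟨D, hD⟩ := (hSc.insert Set.univ).exists_eq_range (Set.insert_nonempty _ _)
  have hDmem : ∀ j, D j ∈ insert Set.univ S := fun j => hD ▸ Set.mem_range_self j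
  have hDo : ∀ j, IsOpen (D j) := by
    intro j
    rcases Set.mem_insert_iff.1 (hDmem j) with h1 | h1
    · rw [h1]; exact isOpen_univ
    · exact hSo _ h1
  have hDd : ∀ j, Dense (D j) := by
    intro j
    rcases Set.mem_insert_iff.1 (hDmem j) with h1 | h1
    · rw [h1]; exact dense_univ
    · exact hSd _ h1
  have hDsub : (⋂ j, D j) ⊆ {x : ℕ → X | Maldistributed (nuInd I) x} := by
    intro x hx
    refine hSsub (Set.mem_sInter.2 fun s hs => ?_)
    have hsr : s ∈ Set.range D := hD ▸ Set.mem_insert_of_mem _ hs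
    obtain ⟨j, rfl⟩ := hsr
    exact Set.mem_iInter.1 hx j
  obtain ⟨g, hkey⟩ := Stmt5Aux.key X U₀ U₁ Metric.isOpen_ball (Metric.nonempty_ball.2 hr)
    hdisj D hDo hDd
  set C : ℕ → Set (ℕ → Bool) := fun N =>
    {f | ∀ n, N ≤ n → ∃ t, t ∈ Set.Icc n (n + g n) ∧ f t = false} with hC
  have hsub : {f : ℕ → Bool | {n : ℕ | f n = true} ∈ I} ⊆ ⋃ N, C N := by
    intro f hf
    by_contra hfc
    simp only [Set.mem_iUnion, not_exists] at hfc
    have hA : ∀ N, ∃ n, N ≤ n ∧ Set.Icc n (n + g n) ⊆ {n | f n = true} := by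
      intro N
      have h1 := hfc N
      simp only [hC, Set.mem_setOf_eq, not_forall] at h1
      obtain ⟨n, hn1, hn2⟩ := h1
      push_neg at hn2
      refine ⟨n, hn1, fun t htt => ?_⟩
      have h3 := hn2 t htt
      cases hft : f t with
      | false => exact absurd hft h3
      | true => first | rfl | exact hft
    obtain ⟨x, hxD, hxU⟩ := hkey {n | f n = true} hA
    have hmal := hDsub (Set.mem_iInter.2 hxD) U₁ Metric.isOpen_ball (Metric.nonempty_ball.2 hr)
    have h2 : {n | x n ∈ U₁} ∈ I := hI.2.1 _ _ hxU hf
    have h3 : nuInd I {n | x n ∈ U₁} = 0 := by simp [nuInd, h2]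
    rw [hmal] at h3
    exact one_ne_zero h3
  show IsMeagre {f : ℕ → Bool | {n : ℕ | f n = true} ∈ I}
  refine IsMeagre.mono (hs := isMeagre_iUnion ?_) hsub
  intro N
  rw [IsMeagre]
  apply residual_of_dense_open
  · have hcompl : (C N)ᶜ = ⋃ n, ⋃ (_ : N ≤ n),
        Set.pi (Set.Icc n (n + g n) : Set ℕ) (fun _ => ({true} : Set Bool)) := by
      ext f
      simp only [hC, Set.mem_compl_iff, Set.mem_setOf_eq, not_forall, Set.mem_iUnion,
        Set.mem_pi, Set.mem_singleton_iff, not_exists, not_and]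
      constructor
      · rintro ⟨n, hn1, hn2⟩
        refine ⟨n, hn1, fun t htt => ?_⟩
        have h3 := hn2 t htt
        cases hft : f t with
        | false => exact absurd hft h3
        | true => first | rfl | exact hft
      · rintro ⟨n, hn1, hn2⟩
        exact ⟨n, hn1, fun t htt hfalse => by
          rw [hn2 t htt] at hfalse; exact Bool.noConfusion hfalse⟩
    rw [hcompl]
    exact isOpen_iUnion fun n => isOpen_iUnion fun _ =>
      isOpen_set_pi (Set.finite_Icc _ _) (fun a _ => isOpen_discrete _)
  · rw [dense_iff_inter_open]
    intro U hU hUne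
    obtain ⟨f, hf⟩ := hUne
    obtain ⟨Fi, u, hu, hpi⟩ := isOpen_pi_iff.1 hU f hf
    set n := max N (Fi.sup Nat.succ) with hn
    refine ⟨fun t => if t ∈ Set.Icc n (n + g n) then true else f t, ?_, ?_⟩
    · apply hpi
      intro a ha
      have haa : a < n := lt_of_lt_of_le (Nat.lt_succ_self a)
        (le_trans (Finset.le_sup (f := Nat.succ) ha) (le_max_right _ _))
      show (if a ∈ Set.Icc n (n + g n) then true else f a) ∈ u a
      rw [if_neg (fun hmem => absurd (Set.mem_Icc.1 hmem).1 (not_le.2 haa))]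
      exact (hu a ha).2
    · intro hfC
      obtain ⟨t, htt, hft⟩ := hfC n (le_max_left _ _)
      have hft' : (if t ∈ Set.Icc n (n + g n) then true else f t) = false := hft
      rw [if_pos htt] at hft'
      exact Bool.noConfusion hft'
end

section
/- Let X be a Hausdorff topological space with at least two points such that the product space X^ω is a Baire space, and let I be an ideal on ω. Suppose there exists a point η ∈ X such that the set S_η := {x ∈ X^ω : η is an I-cluster point of x} is comeager in X^ω. Then I is meager as a subset of the Cantor space 2^ω. -/
open Set

section AuxStmt6

variable {X : Type*} [TopologicalSpace X]

/-- Transfer of the Baire property along a homeomorphism. -/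
theorem baireSpace_of_homeomorph {α β : Type*} [TopologicalSpace α] [TopologicalSpace β]
    (h : α ≃ₜ β) [BaireSpace α] : BaireSpace β := by
  constructor
  intro f ho hd
  have hpre : ∀ n, IsOpen (h ⁻¹' f n) := fun n => (ho n).preimage h.continuous
  have hpred : ∀ n, Dense (h ⁻¹' f n) := by
    intro n
    rw [dense_iff_closure_eq, ← h.preimage_closure, (hd n).closure_eq, preimage_univ]
  have := dense_iInter_of_isOpen_nat hpre hpred
  rw [dense_iff_closure_eq] at this ⊢
  rw [← preimage_iInter, ← h.preimage_closure] at this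
  have := congrArg (fun s => h '' s) this
  simpa [Set.image_preimage_eq _ h.surjective, Set.image_univ, h.surjective.range_eq] using this

/-- Column pattern: the slots before `σn` avoid `closure V`, slot `σn` lands in `V`. -/
def ColPat (V : Set X) (Z : ℕ × ℕ → X) (n σn : ℕ) : Prop :=
  (∀ i < σn, Z (n, i) ∉ closure V) ∧ Z (n, σn) ∈ V

theorem colPat_unique {V : Set X} {Z : ℕ × ℕ → X} {n σ₁ σ₂ : ℕ}
    (h1 : ColPat V Z n σ₁) (h2 : ColPat V Z n σ₂) : σ₁ = σ₂ := by
  by_contra hne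
  rcases Nat.lt_or_ge σ₁ σ₂ with hlt | hge
  · exact h2.1 σ₁ hlt (subset_closure h1.2)
  · exact h1.1 σ₂ (lt_of_le_of_ne hge (Ne.symm hne)) (subset_closure h2.2)

/-- The generic entry condition: there is a level `t' > t` and a basic box `W` inside `Gj`
supported below `t'` such that the `Z`-columns below `t'` realize the box, reading the
searched `V`-slot at "V-columns" and the slot right above it at "free columns". -/
def Dset (V : Set X) (Gj : Set (ℕ → X)) (t : ℕ) (s : Finset ℕ) : Set (ℕ × ℕ → X) :=
  {Z | ∃ (t' : ℕ) (σ : ℕ → ℕ) (W : ℕ → Set X),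
    t < t' ∧ (∀ n, IsOpen (W n)) ∧ (∀ n, t' ≤ n → W n = Set.univ) ∧
    (Set.pi Set.univ W ⊆ Gj) ∧
    (∀ n < t', ColPat V Z n (σ n) ∧
      Z (n, if n ∈ s ∨ t ≤ n then σ n + 1 else σ n) ∈ W n)}

theorem isOpen_Dset {V : Set X} (hV : IsOpen V) (Gj : Set (ℕ → X)) (t : ℕ) (s : Finset ℕ) :
    IsOpen (Dset V Gj t s) := by
  classical
  rw [isOpen_iff_forall_mem_open]
  rintro Z ⟨t', σ, W, ht, hWo, hWs, hWG, hcol⟩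
  refine ⟨⋂ n ∈ Finset.range t',
    ((⋂ i ∈ Finset.range (σ n), (fun Y : ℕ × ℕ → X => Y (n, i)) ⁻¹' (closure V)ᶜ) ∩
      ((fun Y : ℕ × ℕ → X => Y (n, σ n)) ⁻¹' V) ∩
      ((fun Y : ℕ × ℕ → X => Y (n, if n ∈ s ∨ t ≤ n then σ n + 1 else σ n)) ⁻¹' W n)),
    ?_, ?_, ?_⟩
  · intro Y hY
    simp only [Finset.mem_range, Set.mem_iInter, Set.mem_inter_iff, Set.mem_preimage,
      Set.mem_compl_iff] at hY
    refine ⟨t', σ, W, ht, hWo, hWs, hWG, fun n hn => ?_⟩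
    obtain ⟨⟨h1, h2⟩, h3⟩ := hY n hn
    exact ⟨⟨fun i hi => h1 i hi, h2⟩, h3⟩
  · refine isOpen_biInter_finset fun n _ => ?_
    refine IsOpen.inter (IsOpen.inter ?_ ?_) ?_
    · exact isOpen_biInter_finset fun i _ =>
        (isOpen_compl_iff.mpr isClosed_closure).preimage (continuous_apply _)
    · exact hV.preimage (continuous_apply _)
    · exact (hWo n).preimage (continuous_apply _)
  · simp only [Finset.mem_range, Set.mem_iInter, Set.mem_inter_iff, Set.mem_preimage,
      Set.mem_compl_iff]
    intro n hn
    obtain ⟨⟨h1, h2⟩, h3⟩ := hcol n hn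
    exact ⟨⟨fun i hi => h1 i hi, h2⟩, h3⟩

theorem dense_Dset {V : Set X} (hV : IsOpen V) (hVne : V.Nonempty)
    {a₀ : X} (ha₀ : a₀ ∉ closure V)
    {Gj : Set (ℕ → X)} (hGo : IsOpen Gj) (hGd : Dense Gj)
    (t : ℕ) (s : Finset ℕ) :
    Dense (Dset V Gj t s) := by
  classical
  rw [dense_iff_inter_open]
  intro O hO hOne
  obtain ⟨Z₁, hZ₁⟩ := hOne
  obtain ⟨E, u, huo, hEsub⟩ := isOpen_pi_iff.1 hO Z₁ hZ₁
  -- column bound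
  set N : ℕ := max (t + 1) ((E.image Prod.fst).sup id + 1) with hNdef
  have htN : t + 1 ≤ N := le_max_left _ _
  have hcolN : ∀ p ∈ E, p.1 < N := by
    intro p hp
    have h1 : p.1 ≤ (E.image Prod.fst).sup id :=
      Finset.le_sup (f := id) (Finset.mem_image_of_mem Prod.fst hp)
    have h2 : (E.image Prod.fst).sup id + 1 ≤ N := le_max_right _ _
    omega
  -- rowB: first row index beyond all E-constraints in column n
  set rowB : ℕ → ℕ := fun n => (E.filter (fun p => p.1 = n)).sup (fun p => p.2) + 1 with hrowB
  have hfresh : ∀ n i, rowB n ≤ i → (n, i) ∉ E := by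
    intro n i hi hmem
    have hmem2 : ((n, i) : ℕ × ℕ) ∈ E.filter (fun p => p.1 = n) :=
      Finset.mem_filter.mpr ⟨hmem, rfl⟩
    have : i ≤ (E.filter (fun p => p.1 = n)).sup (fun p => p.2) :=
      Finset.le_sup (f := fun p => p.2) hmem2
    simp only [hrowB] at hi
    omega
  set σ₀ : ℕ → ℕ := fun n =>
    if h : ∃ i, (n, i) ∈ E ∧ u (n, i) ⊆ closure V then Nat.find h else rowB n with hσ₀
  have hprefix : ∀ n, ∀ i < σ₀ n, (n, i) ∈ E → ¬ u (n, i) ⊆ closure V := by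
    intro n i hi hiE hsub
    by_cases h : ∃ i, (n, i) ∈ E ∧ u (n, i) ⊆ closure V
    · rw [hσ₀] at hi
      simp only [dif_pos h] at hi
      exact Nat.find_min h hi ⟨hiE, hsub⟩
    · exact h ⟨i, hiE, hsub⟩
  have hatσ : ∀ n, (n, σ₀ n) ∈ E → u (n, σ₀ n) ⊆ closure V := by
    intro n hmem
    by_cases h : ∃ i, (n, i) ∈ E ∧ u (n, i) ⊆ closure V
    · have h2 : σ₀ n = Nat.find h := by rw [hσ₀]; simp only [dif_pos h]
      rw [h2] at hmem ⊢
      exact (Nat.find_spec h).2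
    · exfalso
      have h2 : σ₀ n = rowB n := by rw [hσ₀]; simp only [dif_neg h]
      rw [h2] at hmem
      exact hfresh n (rowB n) le_rfl hmem
  -- A n: the slot-σ constraint
  set A : ℕ → Set X := fun n => V ∩ (if (n, σ₀ n) ∈ E then u (n, σ₀ n) else Set.univ) with hA
  have hAV : ∀ n, A n ⊆ V := fun n => inter_subset_left
  have hAu : ∀ n, (n, σ₀ n) ∈ E → A n ⊆ u (n, σ₀ n) := by
    intro n hmem
    rw [hA]
    simp only [if_pos hmem]
    exact inter_subset_right
  have hAopen : ∀ n, IsOpen (A n) := by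
    intro n
    rw [hA]
    by_cases hmem : (n, σ₀ n) ∈ E
    · simp only [if_pos hmem]; exact hV.inter (huo _ hmem).1
    · simp only [if_neg hmem]; exact hV.inter isOpen_univ
  have hAne : ∀ n, (A n).Nonempty := by
    intro n
    by_cases hmem : (n, σ₀ n) ∈ E
    · have hsub := hatσ n hmem
      have hZu : Z₁ (n, σ₀ n) ∈ u (n, σ₀ n) := (huo _ hmem).2
      have hne := mem_closure_iff.1 (hsub hZu) (u (n, σ₀ n)) (huo _ hmem).1 hZu
      obtain ⟨x, hxu, hxV⟩ := hne
      refine ⟨x, ?_⟩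
      rw [hA]
      simp only [if_pos hmem]
      exact ⟨hxV, hxu⟩
    · rw [hA]; simp only [if_neg hmem, inter_univ]; exact hVne
  -- C n: the constraint box for the auxiliary generic point xs
  set C : ℕ → Set X := fun n =>
    if n ∈ s ∨ t ≤ n then (if (n, σ₀ n + 1) ∈ E then u (n, σ₀ n + 1) else Set.univ)
    else A n with hC
  have hCopen : ∀ n, IsOpen (C n) := by
    intro n
    rw [hC]
    by_cases hfree : n ∈ s ∨ t ≤ n
    · simp only [if_pos hfree]
      by_cases hmem : (n, σ₀ n + 1) ∈ E
      · simp only [if_pos hmem]; exact (huo _ hmem).1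
      · simp only [if_neg hmem]; exact isOpen_univ
    · simp only [if_neg hfree]; exact hAopen n
  have hCne : ∀ n, (C n).Nonempty := by
    intro n
    rw [hC]
    by_cases hfree : n ∈ s ∨ t ≤ n
    · simp only [if_pos hfree]
      by_cases hmem : (n, σ₀ n + 1) ∈ E
      · simp only [if_pos hmem]; exact ⟨Z₁ _, (huo _ hmem).2⟩
      · simp only [if_neg hmem]; exact ⟨a₀, trivial⟩
    · simp only [if_neg hfree]; exact hAne n
  have hCuniv : ∀ n, N ≤ n → C n = Set.univ := by
    intro n hn
    have hfree : n ∈ s ∨ t ≤ n := Or.inr (by omega)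
    have hmem : (n, σ₀ n + 1) ∉ E := fun h => absurd (hcolN _ h) (by simp; omega)
    rw [hC]; simp only [if_pos hfree, if_neg hmem]
  have hpiCopen : IsOpen {x : ℕ → X | ∀ n, x n ∈ C n} := by
    have heq : {x : ℕ → X | ∀ n, x n ∈ C n} = Set.pi (↑(Finset.range N)) C := by
      ext x
      constructor
      · intro hx n _
        exact hx n
      · intro hx n
        by_cases hn : n < N
        · exact hx n (by simpa using hn)
        · rw [hCuniv n (le_of_not_gt hn)]; trivial
    rw [heq]
    exact isOpen_set_pi (Finset.finite_toSet _) (fun n _ => hCopen n)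
  have hpiCne : {x : ℕ → X | ∀ n, x n ∈ C n}.Nonempty :=
    ⟨fun n => (hCne n).choose, fun n => (hCne n).choose_spec⟩
  obtain ⟨xs, hxsC, hxsG⟩ := hGd.inter_open_nonempty _ hpiCopen hpiCne
  obtain ⟨F, w, hwo, hFsub⟩ := isOpen_pi_iff.1 hGo xs hxsG
  set t' : ℕ := max (max N (F.sup id + 1)) (t + 1) with ht'def
  have hNt' : N ≤ t' := le_trans (le_max_left _ _) (le_max_left _ _)
  have htt' : t + 1 ≤ t' := le_max_right _ _
  set W : ℕ → Set X := fun n =>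
    (if n ∈ F then w n else Set.univ) ∩ (if n < N then C n else Set.univ) with hW
  have hWo : ∀ n, IsOpen (W n) := by
    intro n
    rw [hW]
    refine IsOpen.inter ?_ ?_
    · by_cases hn : n ∈ F
      · simp only [if_pos hn]; exact (hwo n hn).1
      · simp only [if_neg hn]; exact isOpen_univ
    · by_cases hn : n < N
      · simp only [if_pos hn]; exact hCopen n
      · simp only [if_neg hn]; exact isOpen_univ
  have hWuniv : ∀ n, t' ≤ n → W n = Set.univ := by
    intro n hn
    have h1 : n ∉ F := by
      intro h
      have := Finset.le_sup (f := id) h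
      have h2 : F.sup id + 1 ≤ t' := le_trans (le_max_right _ _) (le_max_left _ _)
      simp only [id] at this
      omega
    have h2 : ¬ n < N := by omega
    rw [hW]; simp only [if_neg h1, if_neg h2, univ_inter]
  have hWsub : Set.pi Set.univ W ⊆ Gj := by
    intro x hx
    apply hFsub
    intro n hn
    have hmem := hx n (mem_univ n)
    rw [hW] at hmem
    simp only [Finset.mem_coe] at hn
    simp only [if_pos hn] at hmem
    exact hmem.1
  have hxsW : ∀ n, xs n ∈ W n := by
    intro n
    rw [hW]
    constructor
    · by_cases hn : n ∈ F
      · simp only [if_pos hn]; exact (hwo n hn).2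
      · simp only [if_neg hn]; trivial
    · by_cases hn : n < N
      · simp only [if_pos hn]; exact hxsC n
      · simp only [if_neg hn]; trivial
  -- value choices
  set pch : ℕ → ℕ → X := fun n i =>
    if h : (u (n, i) \ closure V).Nonempty then h.choose else a₀ with hpch
  have hpch_notin : ∀ n i, pch n i ∉ closure V := by
    intro n i
    rw [hpch]
    by_cases h : (u (n, i) \ closure V).Nonempty
    · simp only [dif_pos h]; exact h.choose_spec.2
    · simp only [dif_neg h]; exact ha₀
  have hpch_mem : ∀ n i, i < σ₀ n → (n, i) ∈ E → pch n i ∈ u (n, i) := by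
    intro n i hi hiE
    have hnsub := hprefix n i hi hiE
    rw [Set.not_subset] at hnsub
    obtain ⟨x, hxu, hxc⟩ := hnsub
    have h : (u (n, i) \ closure V).Nonempty := ⟨x, hxu, hxc⟩
    rw [hpch]; simp only [dif_pos h]; exact h.choose_spec.1
  set vch : ℕ → X := fun n => (hAne n).choose with hvch
  have hvchA : ∀ n, vch n ∈ A n := fun n => (hAne n).choose_spec
  set σf : ℕ → ℕ := fun n => if n < N then σ₀ n else 0 with hσf
  set Z' : ℕ × ℕ → X := fun p =>
    if p.1 < t' then
      (if p.2 < σf p.1 then pch p.1 p.2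
       else if p.2 = σf p.1 then (if p.1 ∈ s ∨ t ≤ p.1 then vch p.1 else xs p.1)
       else if p.2 = σf p.1 + 1 then (if p.1 ∈ s ∨ t ≤ p.1 then xs p.1 else Z₁ p)
       else Z₁ p)
    else Z₁ p with hZ'
  refine ⟨Z', hEsub ?_, ?_⟩
  · -- Z' ∈ (E : Set _).pi u
    intro p hp
    simp only [Finset.mem_coe] at hp
    obtain ⟨n, i⟩ := p
    have hnN : n < N := hcolN _ hp
    have hnt' : n < t' := lt_of_lt_of_le hnN hNt'
    have hσfn : σf n = σ₀ n := by rw [hσf]; simp only [if_pos hnN]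
    rw [hZ']
    simp only [if_pos hnt']
    rcases Nat.lt_trichotomy i (σf n) with hlt | heq | hgt
    · simp only [if_pos hlt]
      exact hpch_mem n i (hσfn ▸ hlt) hp
    · simp only [if_neg (by omega : ¬ i < σf n), if_pos heq]
      by_cases hfree : n ∈ s ∨ t ≤ n
      · simp only [if_pos hfree]
        have := hAu n (by rwa [← hσfn, ← heq])
        exact heq ▸ hσfn ▸ this (hvchA n)
      · simp only [if_neg hfree]
        have hxc := hxsC n
        rw [hC] at hxc
        simp only [if_neg hfree] at hxc
        have := hAu n (by rwa [← hσfn, ← heq])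
        exact heq ▸ hσfn ▸ this hxc
    · simp only [if_neg (by omega : ¬ i < σf n), if_neg (by omega : ¬ i = σf n)]
      by_cases hcase : i = σf n + 1
      · simp only [if_pos hcase]
        by_cases hfree : n ∈ s ∨ t ≤ n
        · simp only [if_pos hfree]
          have hxc := hxsC n
          rw [hC] at hxc
          simp only [if_pos hfree] at hxc
          have hmem : (n, σ₀ n + 1) ∈ E := by rw [← hσfn, ← hcase]; exact hp
          simp only [if_pos hmem] at hxc
          rw [hcase, hσfn]
          exact hxc
        · simp only [if_neg hfree]
          exact (huo _ hp).2
      · simp only [if_neg hcase]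
        exact (huo _ hp).2
  · -- Z' ∈ Dset V Gj t s
    refine ⟨t', σf, W, by omega, hWo, hWuniv, hWsub, ?_⟩
    intro n hn
    have hZ'at : ∀ i, Z' (n, i) =
        (if i < σf n then pch n i
         else if i = σf n then (if n ∈ s ∨ t ≤ n then vch n else xs n)
         else if i = σf n + 1 then (if n ∈ s ∨ t ≤ n then xs n else Z₁ (n, i))
         else Z₁ (n, i)) := by
      intro i
      rw [hZ']
      simp only [if_pos hn]
    constructor
    · constructor
      · intro i hi
        rw [hZ'at i]
        simp only [if_pos hi]
        exact hpch_notin n i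
      · rw [hZ'at (σf n)]
        simp only [if_neg (lt_irrefl _), if_pos rfl]
        by_cases hfree : n ∈ s ∨ t ≤ n
        · simp only [if_pos hfree]
          exact hAV n (hvchA n)
        · simp only [if_neg hfree]
          have hnN : n < N := by
            push_neg at hfree
            omega
          have hxc := hxsC n
          rw [hC] at hxc
          simp only [if_neg hfree] at hxc
          exact hAV n hxc
    · by_cases hfree : n ∈ s ∨ t ≤ n
      · simp only [if_pos hfree]
        rw [hZ'at (σf n + 1)]
        simp only [if_neg (by omega : ¬ σf n + 1 < σf n), if_neg (by omega : ¬ σf n + 1 = σf n),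
          if_pos rfl, if_pos hfree]
        exact hxsW n
      · simp only [if_neg hfree]
        rw [hZ'at (σf n)]
        simp only [if_neg (lt_irrefl _), if_pos rfl, if_neg hfree]
        exact hxsW n

noncomputable def bF (NEW : (ℕ → ℕ) → ℕ → ℕ) : ℕ → (ℕ → ℕ)
  | 0 => fun _ => 0
  | k + 1 => fun m => if m ≤ k then bF NEW k m else NEW (bF NEW k) k

theorem bF_coh (NEW : (ℕ → ℕ) → ℕ → ℕ) (k m : ℕ) (h : m ≤ k) :
    bF NEW k m = bF NEW m m := by
  induction k with
  | zero =>
    have : m = 0 := by omega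
    subst this; rfl
  | succ k ih =>
    rcases Nat.lt_or_ge m (k + 1) with h1 | h2
    · have hm : m ≤ k := by omega
      show (if m ≤ k then bF NEW k m else NEW (bF NEW k) k) = bF NEW m m
      rw [if_pos hm, ih hm]
    · have hmk : m = k + 1 := by omega
      subst hmk; rfl

theorem bF_succ (NEW : (ℕ → ℕ) → ℕ → ℕ) (k : ℕ) :
    bF NEW (k + 1) (k + 1) = NEW (bF NEW k) k := by
  show (if k + 1 ≤ k then bF NEW k (k + 1) else NEW (bF NEW k) k) = NEW (bF NEW k) k
  rw [if_neg (by omega)]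

end AuxStmt6

theorem idealMeager_of_blocks (I : Set (Set ℕ)) (hI : IsIdealOmega I) (t : ℕ → ℕ)
    (hmono : StrictMono t)
    (hpos : ∀ B : Set ℕ, B.Infinite → (⋃ k ∈ B, Set.Ico (t k) (t (k + 1))) ∉ I) :
    IdealMeager I := by
  classical
  set C : ℕ → Set (ℕ → Bool) := fun m =>
    {f | ∀ k, m ≤ k → ∃ i ∈ Set.Ico (t k) (t (k + 1)), f i = false} with hC
  have hCmeagre : ∀ m, IsMeagre (C m) := by
    intro m
    have hopen : IsOpen (C m)ᶜ := by
      have heq : (C m)ᶜ = ⋃ k, ⋃ (_ : m ≤ k),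
          (⋂ i ∈ Finset.Ico (t k) (t (k + 1)), (fun f : ℕ → Bool => f i) ⁻¹' {true}) := by
        ext f
        simp only [hC, mem_compl_iff, mem_setOf_eq, not_forall, mem_iUnion, mem_iInter,
          Finset.mem_Ico, mem_preimage, mem_singleton_iff]
        constructor
        · rintro ⟨k, hk, hall⟩
          push_neg at hall
          refine ⟨k, hk, fun i hi => ?_⟩
          have h2 := hall i (Set.mem_Ico.mpr hi)
          simpa only [Bool.not_eq_false] using h2
        · rintro ⟨k, hk, hall⟩
          refine ⟨k, hk, ?_⟩
          push_neg
          intro i hi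
          rw [Set.mem_Ico] at hi
          simp only [Bool.not_eq_false]
          exact hall i hi
      rw [heq]
      refine isOpen_iUnion fun k => isOpen_iUnion fun _ =>
        isOpen_biInter_finset fun i _ => ?_
      exact IsOpen.preimage (continuous_apply i) (isOpen_discrete _)
    have hdense : Dense (C m)ᶜ := by
      rw [dense_iff_inter_open]
      intro O hO hOne
      obtain ⟨f₁, hf₁⟩ := hOne
      obtain ⟨F, u, huo, hFsub⟩ := isOpen_pi_iff.1 hO f₁ hf₁
      set k : ℕ := max m (F.sup id + 1) with hk
      have hmk : m ≤ k := le_max_left _ _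
      have hFk : ∀ i ∈ F, i < t k := by
        intro i hi
        have h1 : i ≤ F.sup id := Finset.le_sup (f := id) hi
        have h2 : F.sup id + 1 ≤ k := le_max_right _ _
        have h3 : k ≤ t k := hmono.le_apply
        omega
      set g : ℕ → Bool := fun i => if i ∈ Set.Ico (t k) (t (k + 1)) then true else f₁ i with hg
      refine ⟨g, ?_, ?_⟩
      · apply hFsub
        intro i hi
        simp only [Finset.mem_coe] at hi
        have hnot : i ∉ Set.Ico (t k) (t (k + 1)) := by
          rw [Set.mem_Ico]
          intro hmem
          exact absurd (hFk i hi) (by omega)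
        have : g i = f₁ i := by rw [hg]; simp only [if_neg hnot]
        rw [this]
        exact (huo i hi).2
      · simp only [hC, mem_compl_iff, mem_setOf_eq, not_forall]
        refine ⟨k, hmk, ?_⟩
        push_neg
        intro i hi
        rw [hg]
        simp only [if_pos hi]
        exact fun h => Bool.noConfusion h
    exact residual_of_dense_open hopen hdense
  have hsub : {f : ℕ → Bool | {n : ℕ | f n = true} ∈ I} ⊆ ⋃ m, C m := by
    intro f hf
    simp only [mem_setOf_eq] at hf
    set A : Set ℕ := {n | f n = true} with hA
    have hBfin : {k | Set.Ico (t k) (t (k + 1)) ⊆ A}.Finite := by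
      by_contra hinf
      apply hpos _ hinf
      refine hI.2.1 _ A ?_ hf
      intro n hn
      simp only [mem_iUnion] at hn
      obtain ⟨k, hk, hn⟩ := hn
      exact hk hn
    obtain ⟨m, hm⟩ := hBfin.bddAbove
    simp only [mem_iUnion]
    refine ⟨m + 1, fun k hk => ?_⟩
    have hknot : ¬ Set.Ico (t k) (t (k + 1)) ⊆ A := by
      intro hsub'
      have := hm hsub'
      omega
    rw [Set.not_subset] at hknot
    obtain ⟨i, hi, hiA⟩ := hknot
    refine ⟨i, hi, ?_⟩
    simp only [hA, mem_setOf_eq] at hiA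
    simp only [Bool.not_eq_true] at hiA
    exact hiA
  exact (isMeagre_iUnion hCmeagre).mono hsub


/-- Let `X` be a Hausdorff space with at least two points such that
`X^ω` is a Baire space, and let `I` be an ideal on `ω`. If for some `η ∈ X` the set
`S_η = {x ∈ X^ω : η is an I-cluster point of x}` is comeager in `X^ω`, then `I` is
meager. -/
theorem stmt_6 {X : Type*} [TopologicalSpace X] [T2Space X] [Nontrivial X]
    [BaireSpace (ℕ → X)] (I : Set (Set ℕ)) (hI : IsIdealOmega I) (η : X)
    (h : {x : ℕ → X | IdealClusterPt I x η} ∈ residual (ℕ → X)) :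
    IdealMeager I := by
  classical
  -- separation
  obtain ⟨ξ, hξη⟩ := exists_ne η
  obtain ⟨U, V, hUo, hVo, hηU, hξV, hUV⟩ := t2_separation hξη.symm
  have hVne : V.Nonempty := ⟨ξ, hξV⟩
  have hηcl : η ∉ closure V := by
    intro hmem
    obtain ⟨x, hxU, hxV⟩ := mem_closure_iff.1 hmem U hUo hηU
    exact Set.disjoint_left.1 hUV hxU hxV
  -- countable dense-open family from residual
  obtain ⟨S, hSo, hSd, hScnt, hSsub⟩ := mem_residual_iff.1 h
  have hTcnt : (insert Set.univ S).Countable := hScnt.insert _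
  have hTne : (insert Set.univ S).Nonempty := ⟨Set.univ, Set.mem_insert _ _⟩
  obtain ⟨G, hGrange⟩ := hTcnt.exists_eq_range hTne
  have hGo : ∀ j, IsOpen (G j) := by
    intro j
    have : G j ∈ insert Set.univ S := hGrange ▸ Set.mem_range_self j
    rcases this with hu | hs
    · rw [hu]; exact isOpen_univ
    · exact hSo _ hs
  have hGd : ∀ j, Dense (G j) := by
    intro j
    have : G j ∈ insert Set.univ S := hGrange ▸ Set.mem_range_self j
    rcases this with hu | hs
    · rw [hu]; exact dense_univ
    · exact hSd _ hs
  have hGsub : (⋂ j, G j) ⊆ {x : ℕ → X | IdealClusterPt I x η} := by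
    intro x hx
    apply hSsub
    intro si hsi
    have hx2 : x ∈ ⋂₀ insert Set.univ S := by
      rw [hGrange, Set.sInter_range]
      exact hx
    exact hx2 si (Set.mem_insert_of_mem _ hsi)
  -- Baire on the double-indexed product
  haveI : BaireSpace (ℕ × ℕ → X) :=
    baireSpace_of_homeomorph
      (Homeomorph.piCongrLeft (Y := fun _ : ℕ × ℕ => X) (Denumerable.eqv (ℕ × ℕ)).symm)
  haveI : Nonempty X := ⟨η⟩
  -- generic point
  have hDd : Dense (⋂ q : ℕ × ℕ × Finset ℕ, Dset V (G q.1) q.2.1 q.2.2) := by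
    refine dense_iInter_of_isOpen (fun q => isOpen_Dset hVo _ _ _) (fun q => ?_)
    exact dense_Dset hVo hVne hηcl (hGo q.1) (hGd q.1) q.2.1 q.2.2
  obtain ⟨Z, hZmem⟩ := hDd.nonempty
  have hZ : ∀ (j t : ℕ) (s : Finset ℕ), Z ∈ Dset V (G j) t s := by
    intro j t s
    exact Set.mem_iInter.1 hZmem (j, t, s)
  -- slot function γ
  have hγex : ∀ n, ∃ σn, ColPat V Z n σn := by
    intro n
    obtain ⟨t', σ, W, ht, -, -, -, hcols⟩ := hZ 0 n ∅
    exact ⟨σ n, (hcols n (by omega)).1⟩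
  set γ : ℕ → ℕ := fun n => (hγex n).choose with hγdef
  have hγ : ∀ n, ColPat V Z n (γ n) := fun n => (hγex n).choose_spec
  -- witness extractors
  set P : ℕ → ℕ → Finset ℕ → ℕ := fun j t s => (hZ j t s).choose with hP
  set Pσ : ℕ → ℕ → Finset ℕ → (ℕ → ℕ) := fun j t s => (hZ j t s).choose_spec.choose with hPσ
  set PW : ℕ → ℕ → Finset ℕ → (ℕ → Set X) :=
    fun j t s => (hZ j t s).choose_spec.choose_spec.choose with hPW
  have Pspec : ∀ (j t : ℕ) (s : Finset ℕ),
      t < P j t s ∧ (∀ n, IsOpen (PW j t s n)) ∧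
      (∀ n, P j t s ≤ n → PW j t s n = Set.univ) ∧
      (Set.pi Set.univ (PW j t s) ⊆ G j) ∧
      (∀ n < P j t s, ColPat V Z n (Pσ j t s n) ∧
        Z (n, if n ∈ s ∨ t ≤ n then Pσ j t s n + 1 else Pσ j t s n) ∈ PW j t s n) :=
    fun j t s => (hZ j t s).choose_spec.choose_spec.choose_spec
  -- block boundary recursion
  set NEW : (ℕ → ℕ) → ℕ → ℕ := fun p k =>
    max (p k + 1) (((Finset.range (k + 1)) ×ˢ (Finset.range k).powerset).sup
      (fun q => P q.1 (p k) (q.2.biUnion (fun i => Finset.Ico (p i) (p (i + 1)))))) with hNEW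
  set tt : ℕ → ℕ := fun m => bF NEW m m with htt
  have httsucc : ∀ k, tt (k + 1) = NEW (bF NEW k) k := fun k => bF_succ NEW k
  have hbFtt : ∀ k m, m ≤ k → bF NEW k m = tt m := fun k m hm => bF_coh NEW k m hm
  have htmono : StrictMono tt := by
    apply strictMono_nat_of_lt_succ
    intro k
    have h1 : bF NEW k k + 1 ≤ NEW (bF NEW k) k := le_max_left _ _
    have h2 : bF NEW k k = tt k := rfl
    rw [httsucc k]
    omega
  -- key bound
  have hbound : ∀ (j k : ℕ) (b : Finset ℕ), j ≤ k → b ⊆ Finset.range k →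
      P j (tt k) (b.biUnion (fun i => Finset.Ico (tt i) (tt (i + 1)))) ≤ tt (k + 1) := by
    intro j k b hj hb
    rw [httsucc k, hNEW]
    have heqb : b.biUnion (fun i => Finset.Ico (bF NEW k i) (bF NEW k (i + 1))) =
        b.biUnion (fun i => Finset.Ico (tt i) (tt (i + 1))) := by
      apply Finset.biUnion_congr rfl
      intro i hi
      have hik : i < k := Finset.mem_range.1 (hb hi)
      rw [hbFtt k i (by omega), hbFtt k (i + 1) (by omega)]
    have hmem : (j, b) ∈ (Finset.range (k + 1)) ×ˢ (Finset.range k).powerset :=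
      Finset.mem_product.2 ⟨Finset.mem_range.2 (by omega), Finset.mem_powerset.2 hb⟩
    have hle := Finset.le_sup (f := fun q : ℕ × Finset ℕ =>
      P q.1 (bF NEW k k) (q.2.biUnion (fun i => Finset.Ico (bF NEW k i) (bF NEW k (i + 1))))) hmem
    simp only at hle
    rw [heqb] at hle
    have h2 : bF NEW k k = tt k := rfl
    rw [h2] at hle
    exact le_trans hle (le_max_right _ _)
  -- the key positivity property
  have key : ∀ B : Set ℕ, B.Infinite → (⋃ k ∈ B, Set.Ico (tt k) (tt (k + 1))) ∉ I := by
    intro B hB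
    set EB : Set ℕ := ⋃ k ∈ B, Set.Ico (tt k) (tt (k + 1)) with hEB
    set y : ℕ → X := fun n => Z (n, γ n + if n ∈ EB then 1 else 0) with hy
    have hyV : ∀ n, n ∉ EB → y n ∈ V := by
      intro n hn
      rw [hy]
      simp only [if_neg hn, add_zero]
      exact (hγ n).2
    have hyG : ∀ j, y ∈ G j := by
      intro j
      obtain ⟨k, hkB, hjk⟩ := hB.exists_gt j
      set b : Finset ℕ := (Finset.range k).filter (fun i => i ∈ B) with hbdef
      have hbsub : b ⊆ Finset.range k := Finset.filter_subset _ _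
      set sb : Finset ℕ := b.biUnion (fun i => Finset.Ico (tt i) (tt (i + 1))) with hsb
      obtain ⟨ht', hWo, hWuniv, hWsub, hcols⟩ := Pspec j (tt k) sb
      have ht'le : P j (tt k) sb ≤ tt (k + 1) := hbound j k b (by omega) hbsub
      apply hWsub
      rw [Set.mem_univ_pi]
      intro n
      by_cases hn : n < P j (tt k) sb
      · obtain ⟨hcp, hslot⟩ := hcols n hn
        have hσγ : Pσ j (tt k) sb n = γ n := colPat_unique hcp (hγ n)
        have hiff : (n ∈ sb ∨ tt k ≤ n) ↔ n ∈ EB := by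
          constructor
          · rintro (hns | hnk)
            · rw [hsb] at hns
              obtain ⟨i, hib, hni⟩ := Finset.mem_biUnion.1 hns
              rw [hbdef] at hib
              obtain ⟨-, hiB⟩ := Finset.mem_filter.1 hib
              rw [hEB]
              simp only [Set.mem_iUnion]
              exact ⟨i, hiB, Set.mem_Ico.2 (Finset.mem_Ico.1 hni)⟩
            · rw [hEB]
              simp only [Set.mem_iUnion]
              exact ⟨k, hkB, Set.mem_Ico.2 ⟨hnk, by omega⟩⟩
          · intro hnE
            rw [hEB] at hnE
            simp only [Set.mem_iUnion] at hnE
            obtain ⟨i, hiB, hni⟩ := hnE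
            rw [Set.mem_Ico] at hni
            rcases lt_trichotomy i k with hik | hik | hik
            · left
              rw [hsb]
              apply Finset.mem_biUnion.2
              refine ⟨i, ?_, Finset.mem_Ico.2 hni⟩
              rw [hbdef]
              exact Finset.mem_filter.2 ⟨Finset.mem_range.2 hik, hiB⟩
            · right
              rw [← hik]
              exact hni.1
            · exfalso
              have h1 : tt (k + 1) ≤ tt i := htmono.monotone (by omega)
              omega
        by_cases hfree : n ∈ sb ∨ tt k ≤ n
        · rw [if_pos hfree] at hslot
          have hyn : y n = Z (n, γ n + 1) := by
            rw [hy]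
            simp only [if_pos (hiff.1 hfree)]
          rw [hyn, ← hσγ]
          exact hslot
        · rw [if_neg hfree] at hslot
          have hyn : y n = Z (n, γ n) := by
            rw [hy]
            have : n ∉ EB := fun hc => hfree (hiff.2 hc)
            simp only [if_neg this, add_zero]
          rw [hyn, ← hσγ]
          exact hslot
      · rw [hWuniv n (by omega)]
        trivial
    have hycl : IdealClusterPt I y η := hGsub (Set.mem_iInter.2 hyG)
    have hhits : {n : ℕ | y n ∈ U} ∉ I := hycl U hUo hηU
    intro hEBI
    apply hhits
    refine hI.2.1 _ EB ?_ hEBI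
    intro n hn
    by_contra hnE
    exact Set.disjoint_left.1 hUV hn (hyV n hnE)
  exact idealMeager_of_blocks I hI tt htmono key
end

section
/- Let I be a meager ideal on ω, let X be a separable metric space, and let η ∈ X. Then the set S_η := {x ∈ X^ω : η is an I-cluster point of x} is comeager in X^ω. -/
open Set

lemma cyl_open (h : ℕ → Bool) (m : ℕ) :
    IsOpen {g : ℕ → Bool | ∀ i, i < m → g i = h i} := by
  have : {g : ℕ → Bool | ∀ i, i < m → g i = h i}
      = ⋂ i ∈ Finset.range m, (fun g : ℕ → Bool => g i) ⁻¹' {h i} := by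
    ext g; simp [Finset.mem_range]
  rw [this]
  exact isOpen_biInter_finset fun i _ =>
    (continuous_apply i).isOpen_preimage _ (isOpen_discrete _)

lemma cyl_sub {U : Set (ℕ → Bool)} (hU : IsOpen U) {h : ℕ → Bool} (hh : h ∈ U) :
    ∃ m : ℕ, ∀ g : ℕ → Bool, (∀ i, i < m → g i = h i) → g ∈ U := by
  obtain ⟨I, u, h1, h2⟩ := isOpen_pi_iff.1 hU h hh
  refine ⟨(I.sup id) + 1, fun g hg => h2 ?_⟩
  intro a ha
  rw [hg a (Nat.lt_succ_of_le (Finset.le_sup (f := id) ha))]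
  exact (h1 a ha).2

lemma block_aux {U : Set (ℕ → Bool)} (hU : IsOpen U) (hD : Dense U) (n : ℕ)
    (F : Finset (Fin n → Bool)) :
    ∃ m, n ≤ m ∧ ∃ t : ℕ → Bool, ∀ s ∈ F, ∀ g : ℕ → Bool,
      (∀ i : Fin n, g i = s i) → (∀ i, n ≤ i → i < m → g i = t i) → g ∈ U := by
  classical
  induction F using Finset.induction_on with
  | empty => exact ⟨n, le_refl n, fun _ => false, by simp⟩
  | @insert s F hs ih =>
    obtain ⟨m, hnm, t, ht⟩ := ih
    set h : ℕ → Bool := fun i => if hi : i < n then s ⟨i, hi⟩ else t i with hdef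
    have hCopen : IsOpen {g : ℕ → Bool | ∀ i, i < m → g i = h i} := cyl_open h m
    have hCne : {g : ℕ → Bool | ∀ i, i < m → g i = h i}.Nonempty := ⟨h, fun _ _ => rfl⟩
    obtain ⟨h', hh'C, hh'U⟩ := hD.inter_open_nonempty _ hCopen hCne
    obtain ⟨m₀, hm₀⟩ := cyl_sub hU hh'U
    refine ⟨max m m₀, le_trans hnm (le_max_left _ _),
      fun i => if i < m then t i else h' i, ?_⟩
    intro s' hs' g hgs hgt
    simp only at hgt
    rcases Finset.mem_insert.1 hs' with rfl | hs'F
    · apply hm₀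
      intro i him₀
      have hi' : i < max m m₀ := lt_of_lt_of_le him₀ (le_max_right _ _)
      rcases lt_or_ge i n with hin | hni
      · have := hgs ⟨i, hin⟩
        simp only at this
        rw [this, hh'C i (lt_of_lt_of_le hin hnm)]
        simp [hdef, hin]
      · rcases lt_or_ge i m with him | hmi
        · rw [hgt i hni hi', if_pos him, hh'C i him]
          simp [hdef, Nat.not_lt.2 hni]
        · rw [hgt i hni hi', if_neg (Nat.not_lt.2 hmi)]
    · refine ht s' hs'F g hgs ?_
      intro i hni him
      rw [hgt i hni (lt_of_lt_of_le him (le_max_left _ _)), if_pos him]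

lemma block {U : Set (ℕ → Bool)} (hU : IsOpen U) (hD : Dense U) (n : ℕ) :
    ∃ m, n < m ∧ ∃ t : ℕ → Bool, ∀ g : ℕ → Bool,
      (∀ i, n ≤ i → i < m → g i = t i) → g ∈ U := by
  obtain ⟨m, hnm, t, ht⟩ := block_aux hU hD n Finset.univ
  refine ⟨m + 1, Nat.lt_succ_of_le hnm, t, fun g hg => ?_⟩
  exact ht (fun i : Fin n => g i) (Finset.mem_univ _) g (fun _ => rfl)
    (fun i h1 h2 => hg i h1 (Nat.lt_succ_of_lt h2))

lemma talagrand_s7 (I : Set (Set ℕ)) (hered : ∀ A B : Set ℕ, A ⊆ B → B ∈ I → A ∈ I)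
    (hMg : IdealMeager I) :
    ∃ n : ℕ → ℕ, (∀ k, n k < n (k + 1)) ∧
      ∀ A : Set ℕ, (∀ m, ∃ k, m ≤ k ∧ ∀ i, n k ≤ i → i < n (k + 1) → i ∈ A) → A ∉ I := by
  classical
  obtain ⟨S, hSo, hSd, hSc, hSs⟩ := mem_residual_iff.1 hMg
  obtain ⟨f, hf⟩ := (hSc.insert univ).exists_eq_range (insert_nonempty _ _)
  have hmem : ∀ j, f j ∈ insert univ S := fun j => hf ▸ mem_range_self j
  have hfo : ∀ j, IsOpen (f j) := fun j => by
    rcases hmem j with h | h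
    · rw [h]; exact isOpen_univ
    · exact hSo _ h
  have hfd : ∀ j, Dense (f j) := fun j => by
    rcases hmem j with h | h
    · rw [h]; exact dense_univ
    · exact hSd _ h
  set V : ℕ → Set (ℕ → Bool) := fun m => Nat.rec (f 0) (fun m' ih => ih ∩ f (m' + 1)) m
    with hV
  have hVs : ∀ m, V (m + 1) = V m ∩ f (m + 1) := fun m => rfl
  have hVo : ∀ m, IsOpen (V m) := by
    intro m; induction m with
    | zero => exact hfo 0
    | succ m ih => rw [hVs]; exact ih.inter (hfo (m + 1))
  have hVd : ∀ m, Dense (V m) := by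
    intro m; induction m with
    | zero => exact hfd 0
    | succ m ih => rw [hVs]; exact ih.inter_of_isOpen_left (hfd (m + 1)) (hVo m)
  have hVanti : ∀ j m, j ≤ m → V m ⊆ V j := by
    intro j m hjm
    induction hjm with
    | refl => exact subset_rfl
    | step _ ih => exact fun x hx => ih (by rw [hVs] at hx; exact hx.1)
  have hVf : ∀ j, V j ⊆ f j := by
    intro j; cases j with
    | zero => exact subset_rfl
    | succ j => exact fun x hx => (by rw [hVs] at hx; exact hx.2 : x ∈ f (j + 1))
  have hVI : ∀ g : ℕ → Bool, (∀ m, g ∈ V m) → {n : ℕ | g n = true} ∉ I := by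
    intro g hg hgI
    have : g ∈ ⋂₀ S := by
      intro u hu
      have : u ∈ range f := by rw [← hf]; exact mem_insert_of_mem _ hu
      obtain ⟨j, rfl⟩ := this
      exact hVf j (hg j)
    exact hSs this hgI
  -- the recursive construction
  have hblock : ∀ m k : ℕ, ∃ m', k < m' ∧ ∃ t : ℕ → Bool, ∀ g : ℕ → Bool,
      (∀ i, k ≤ i → i < m' → g i = t i) → g ∈ V m :=
    fun m k => block (hVo m) (hVd m) k
  choose M hM1 T hT using hblock
  set n : ℕ → ℕ := fun k => Nat.rec 0 (fun k' ih => M k' ih) k with hn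
  have hns : ∀ k, n (k + 1) = M k (n k) := fun k => rfl
  have hmono : ∀ k, n k < n (k + 1) := fun k => by rw [hns]; exact hM1 k (n k)
  refine ⟨n, hmono, ?_⟩
  -- strict mono consequences
  have hmono' : StrictMono n := strictMono_nat_of_lt_succ hmono
  have hdisj : ∀ k k' i, n k ≤ i → i < n (k + 1) → n k' ≤ i → i < n (k' + 1) → k = k' := by
    intro k k' i h1 h2 h3 h4
    by_contra hne
    rcases Nat.lt_or_ge k k' with h | h
    · exact absurd (lt_of_lt_of_le h2 (hmono'.le_iff_le.2 h)) (Nat.not_lt.2 h3)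
    · have h' : k' < k := lt_of_le_of_ne h (Ne.symm hne)
      exact absurd (lt_of_lt_of_le h4 (hmono'.le_iff_le.2 h')) (Nat.not_lt.2 h1)
  intro A hA hAI
  choose κ hκ1 hκ2 using hA
  set P : ℕ → Prop := fun i => ∃ m, n (κ m) ≤ i ∧ i < n (κ m + 1) ∧ T (κ m) (n (κ m)) i = true
    with hP
  set g : ℕ → Bool := fun i => decide (P i) with hg
  have hgP : ∀ i, g i = true ↔ P i := fun i => decide_eq_true_iff
  -- g's set is a subset of A, hence in I
  have hBI : {i : ℕ | g i = true} ∈ I := by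
    refine hered _ A ?_ hAI
    intro i hi
    obtain ⟨m, h1, h2, _⟩ := (hgP i).1 hi
    exact hκ2 m i h1 h2
  -- but g is in every V m
  refine hVI g ?_ hBI
  intro m
  have hk := hκ1 m
  refine hVanti m (κ m) hk ?_
  refine hT (κ m) (n (κ m)) g ?_
  intro i h1 h2
  by_cases ht : T (κ m) (n (κ m)) i = true
  · rw [ht]
    exact (hgP i).2 ⟨m, h1, h2, ht⟩
  · have : ¬ P i := by
      rintro ⟨m', h1', h2', ht'⟩
      have := hdisj (κ m') (κ m) i h1' h2' h1 h2
      rw [this] at ht'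
      exact ht ht'
    rw [Bool.not_eq_true] at ht
    rw [ht]
    simp only [hg]
    rw [decide_eq_false_iff_not]
    exact this

/-- If `I` is a meager ideal on `ω`, `X` is a separable metric space
and `η ∈ X`, then the set `S_η = {x ∈ X^ω : η is an I-cluster point of x}` is comeager
in `X^ω`. -/
theorem stmt_7 {X : Type*} [MetricSpace X] [TopologicalSpace.SeparableSpace X]
    (I : Set (Set ℕ)) (hI : IsIdealOmega I) (hM : IdealMeager I) (η : X) :
    {x : ℕ → X | IdealClusterPt I x η} ∈ residual (ℕ → X) := by
  classical
  obtain ⟨n, hmono, htal⟩ := talagrand_s7 I hI.2.1 hM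
  have hkn : ∀ k, k ≤ n k := by
    intro k; induction k with
    | zero => exact Nat.zero_le _
    | succ k ih => exact Nat.lt_of_le_of_lt ih (hmono k)
  set W : ℕ → Set (ℕ → X) := fun m =>
    {x | ∃ k, m ≤ k ∧ ∀ i, n k ≤ i → i < n (k + 1) → dist (x i) η < 1 / (m + 1)} with hW
  have hWo : ∀ m, IsOpen (W m) := by
    intro m
    have : W m = ⋃ k, ⋃ (_ : m ≤ k),
        ⋂ i ∈ Finset.Ico (n k) (n (k + 1)),
          (fun x : ℕ → X => x i) ⁻¹' Metric.ball η (1 / (m + 1)) := by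
      ext x
      simp only [hW, mem_setOf_eq, mem_iUnion, Finset.mem_Ico, mem_iInter, mem_preimage,
        Metric.mem_ball]
      constructor
      · rintro ⟨k, hk, h⟩; exact ⟨k, hk, fun i hi => h i hi.1 hi.2⟩
      · rintro ⟨k, hk, h⟩; exact ⟨k, hk, fun i h1 h2 => h i ⟨h1, h2⟩⟩
    rw [this]
    exact isOpen_iUnion fun k => isOpen_iUnion fun _ =>
      isOpen_biInter_finset fun i _ =>
        (continuous_apply i).isOpen_preimage _ Metric.isOpen_ball
  have hWd : ∀ m, Dense (W m) := by
    intro m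
    rw [dense_iff_inter_open]
    intro O hO hOne
    obtain ⟨x, hx⟩ := hOne
    obtain ⟨J, u, h1, h2⟩ := isOpen_pi_iff.1 hO x hx
    set k : ℕ := max m (J.sup id + 1) with hk
    set x' : ℕ → X := fun i => if n k ≤ i ∧ i < n (k + 1) then η else x i with hx'
    refine ⟨x', h2 ?_, ⟨k, le_max_left _ _, ?_⟩⟩
    · intro a ha
      have hauniq : ¬ (n k ≤ a ∧ a < n (k + 1)) := by
        rintro ⟨h3, _⟩
        have : a < k := Nat.lt_of_le_of_lt (Finset.le_sup (f := id) ha)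
          (Nat.lt_of_lt_of_le (Nat.lt_succ_self _) (le_max_right _ _))
        exact absurd (Nat.lt_of_lt_of_le this (hkn k)) (Nat.not_lt.2 h3)
      simp only [hx', if_neg hauniq]
      exact (h1 a ha).2
    · intro i hi1 hi2
      have hxi : x' i = η := by
        simp only [hx']
        exact if_pos ⟨hi1, hi2⟩
      rw [hxi, dist_self]
      positivity
  have hres : (⋂ m, W m) ∈ residual (ℕ → X) :=
    (countable_iInter_mem).2 fun m => residual_of_dense_open (hWo m) (hWd m)
  refine Filter.mem_of_superset hres ?_
  intro x hx
  intro U hU hηU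
  obtain ⟨ε, hε, hball⟩ := Metric.isOpen_iff.1 hU η hηU
  obtain ⟨j, hj⟩ := exists_nat_one_div_lt hε
  refine htal _ ?_
  intro m
  have hxm := mem_iInter.1 hx (max m j)
  obtain ⟨k, hk1, hk2⟩ := hxm
  refine ⟨k, le_trans (le_max_left _ _) hk1, ?_⟩
  intro i h1 h2
  have hd : dist (x i) η < ε := by
    refine lt_of_lt_of_le (hk2 i h1 h2) (le_trans ?_ hj.le)
    apply one_div_le_one_div_of_le
    · positivity
    · exact_mod_cast Nat.succ_le_succ (le_max_right m j)
  exact hball (Metric.mem_ball.2 hd)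
end

section
/- Let X be a separable metric space and suppose that ν : P(ω) → ℝ is a diffuse capacity satisfying condition (♦). Then the set Σ_ν(X) of ν-maldistributed sequences is comeager in X^ω. -/
open Set

lemma key {X : Type*} [TopologicalSpace X] (ν : Set ℕ → ℝ)
    (hmono : ∀ A B : Set ℕ, A ⊆ B → ν A ≤ ν B)
    (hone : ∀ F : Set ℕ, F.Finite → ν (Set.univ \ F) = 1)
    (hdiamond : CondDiamond ν)
    (U : Set X) (hU : IsOpen U) (hne : U.Nonempty) :
    {x : ℕ → X | ν {n | x n ∈ U} = 1} ∈ residual (ℕ → X) := by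
  obtain ⟨p, hp⟩ := hne
  have hνuniv : ν (Set.univ : Set ℕ) = 1 := by
    have := hone ∅ finite_empty
    simpa using this
  have hα : ∀ m : ℕ, (1 : ℝ) / (m + 2) ∈ Set.Ioo (0 : ℝ) 1 := by
    intro m
    constructor
    · positivity
    · rw [div_lt_one (by positivity)]
      have : (0 : ℝ) ≤ (m : ℝ) := Nat.cast_nonneg m
      linarith
  choose g hg using fun m : ℕ => hdiamond (1 / (m + 2)) (hα m)
  set S : ℕ → ℕ → Set (ℕ → X) :=
    fun m N => {x | ∃ n, N ≤ n ∧ ∀ k ∈ Set.Icc n (n + g m n), x k ∈ U} with hS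
  have hSopen : ∀ m N, IsOpen (S m N) := by
    intro m N
    have : S m N = ⋃ n, ⋃ _ : N ≤ n, ⋂ k ∈ Set.Icc n (n + g m n),
        (fun x : ℕ → X => x k) ⁻¹' U := by
      ext x
      simp [hS]
    rw [this]
    refine isOpen_iUnion fun n => isOpen_iUnion fun _ => ?_
    exact (Set.finite_Icc _ _).isOpen_biInter fun k _ =>
      (continuous_apply k : Continuous fun x : ℕ → X => x k).isOpen_preimage U hU
  have hSdense : ∀ m N, Dense (S m N) := by
    intro m N
    rw [dense_iff_inter_open]
    rintro W hW ⟨x, hx⟩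
    obtain ⟨I, u, hu, hsub⟩ := isOpen_pi_iff.1 hW x hx
    set n := max N (I.sup id + 1) with hn
    set y : ℕ → X := fun k => if k ∈ I then x k else p with hy
    refine ⟨y, hsub fun i hi => ?_, n, le_max_left _ _, fun k hk => ?_⟩
    · show (if i ∈ I then x i else p) ∈ u i
      rw [if_pos (Finset.mem_coe.1 hi)]
      exact (hu i hi).2
    · have hkI : k ∉ I := by
        intro hkI
        have h1 : k ≤ I.sup id := Finset.le_sup (f := id) hkI
        have h2 : I.sup id + 1 ≤ n := le_max_right _ _
        have h3 : n ≤ k := hk.1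
        omega
      show (if k ∈ I then x k else p) ∈ U
      rw [if_neg hkI]
      exact hp
  have hsubset : (⋂ m, ⋂ N, S m N) ⊆ {x : ℕ → X | ν {n | x n ∈ U} = 1} := by
    intro x hx
    simp only [Set.mem_iInter] at hx
    set A : Set ℕ := {n | x n ∈ U} with hA
    have hle : ν A ≤ 1 := hνuniv ▸ hmono A Set.univ (Set.subset_univ A)
    rcases lt_or_eq_of_le hle with hlt | heq
    · exfalso
      obtain ⟨m, hm⟩ := exists_nat_one_div_lt (sub_pos.2 hlt)
      have hm' : ν A ≤ 1 - 1 / ((m : ℝ) + 2) := by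
        have h1 : (1 : ℝ) / (m + 2) ≤ 1 / (m + 1) := by
          apply div_le_div_of_nonneg_left (by norm_num) (by positivity)
          linarith
        linarith
      have hdd : ν (Set.univ \ (Set.univ \ A)) ≤ 1 - 1 / ((m : ℝ) + 2) := by
        rwa [Set.diff_diff_cancel_left (Set.subset_univ A)]
      obtain ⟨N, hN⟩ := hg m (Set.univ \ A) hdd
      obtain ⟨n, hnN, hnU⟩ := hx m N
      obtain ⟨k, hk1, hk2⟩ := hN n hnN
      exact hk1.2 (hnU k hk2)
    · exact heq
  have hmem : (⋂ m, ⋂ N, S m N) ∈ residual (ℕ → X) := by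
    rw [countable_iInter_mem]
    intro m
    rw [countable_iInter_mem]
    intro N
    exact residual_of_dense_open (hSopen m N) (hSdense m N)
  exact Filter.mem_of_superset hmem hsubset

/-- **Mišík–Tóth.** Let `X` be a separable metric space and let
`ν : P(ω) → ℝ` be a diffuse capacity (monotone, `ν(F) = 0` and `ν(ω \ F) = 1` for all
finite `F`) which satisfies condition (♦). Then the set of `ν`-maldistributed sequences
is comeager in `X^ω`. -/
theorem stmt_9 {X : Type*} [MetricSpace X] [TopologicalSpace.SeparableSpace X]
    (ν : Set ℕ → ℝ)
    (hmono : ∀ A B : Set ℕ, A ⊆ B → ν A ≤ ν B)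
    (hzero : ∀ F : Set ℕ, F.Finite → ν F = 0)
    (hone : ∀ F : Set ℕ, F.Finite → ν (Set.univ \ F) = 1)
    (hdiamond : CondDiamond ν) :
    {x : ℕ → X | Maldistributed ν x} ∈ residual (ℕ → X) := by
  obtain ⟨D, hDc, hDd⟩ := TopologicalSpace.exists_countable_dense X
  have hνuniv : ν (Set.univ : Set ℕ) = 1 := by
    have := hone ∅ finite_empty
    simpa using this
  haveI : Countable D := hDc.to_subtype
  have hmem : (⋂ (d : D) (k : ℕ),
      {x : ℕ → X | ν {n | x n ∈ Metric.ball (d : X) (1 / (k + 1))} = 1})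
      ∈ residual (ℕ → X) := by
    rw [countable_iInter_mem]
    intro d
    rw [countable_iInter_mem]
    intro k
    exact key ν hmono hone hdiamond _ Metric.isOpen_ball
      ⟨d, Metric.mem_ball_self (by positivity)⟩
  refine Filter.mem_of_superset hmem ?_
  intro x hx
  simp only [Set.mem_iInter] at hx
  intro U hU ⟨q, hq⟩
  obtain ⟨ε, hε, hball⟩ := Metric.isOpen_iff.1 hU q hq
  obtain ⟨k, hk⟩ := exists_nat_one_div_lt (show (0:ℝ) < ε / 2 by linarith)
  have hr : (0:ℝ) < 1 / (k + 1) := by positivity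
  obtain ⟨d, hd1, hd2⟩ := Metric.dense_iff.1 hDd q (1 / (k + 1)) hr
  have hsub : Metric.ball d (1 / (k + 1)) ⊆ U := by
    intro z hz
    apply hball
    have h1 : dist z d < 1 / (k + 1) := Metric.mem_ball.1 hz
    have h2 : dist d q < 1 / (k + 1) := Metric.mem_ball.1 hd1
    have : dist z q ≤ dist z d + dist d q := dist_triangle z d q
    simp only [Metric.mem_ball]
    linarith
  have h1 := hx ⟨d, hd2⟩ k
  refine le_antisymm (hνuniv ▸ hmono _ Set.univ (Set.subset_univ _)) ?_
  calc (1:ℝ) = ν {n | x n ∈ Metric.ball d (1 / (k + 1))} := h1.symm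
    _ ≤ ν {n | x n ∈ U} := hmono _ _ fun n hn => hsub hn
end

section
/- Let X be a separable metric space and let φ : P(ω) → [0,∞] be a lower semicontinuous submeasure with ‖ω‖_φ = 1. Then the set Σ_{‖·‖_φ}(X) of ‖·‖_φ-maldistributed sequences is comeager in X^ω. -/
open Set

open scoped ENNReal

/-- `φ` is a lower semicontinuous submeasure (lscsm): monotone, subadditive, finite on
finite sets, and `φ(A) = sup {φ(A ∩ [0,n]) : n ∈ ω}` for all `A ⊆ ω`. -/
def IsLSCSM (φ : Set ℕ → ℝ≥0∞) : Prop :=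
  (∀ A B : Set ℕ, A ⊆ B → φ A ≤ φ B) ∧
  (∀ A B : Set ℕ, φ (A ∪ B) ≤ φ A + φ B) ∧
  (∀ F : Set ℕ, F.Finite → φ F < ⊤) ∧
  (∀ A : Set ℕ, φ A = ⨆ n : ℕ, φ (A ∩ Set.Iic n))

/-- `‖S‖_φ = lim_n φ(S \ [0,n])`.  For a monotone `φ` the sequence
`n ↦ φ (S \ [0,n])` is antitone, so its limit equals its infimum. -/
noncomputable def phiNorm (φ : Set ℕ → ℝ≥0∞) (S : Set ℕ) : ℝ≥0∞ :=
  ⨅ n : ℕ, φ (S \ Set.Iic n)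

/-- `x` is `ν`-maldistributed, for an extended-real-valued `ν`. -/
def MaldistributedE {X : Type*} [TopologicalSpace X] (ν : Set ℕ → ℝ≥0∞)
    (x : ℕ → X) : Prop :=
  ∀ U : Set X, IsOpen U → U.Nonempty → ν {n : ℕ | x n ∈ U} = 1


section Aux

open scoped ENNReal

variable {X : Type*} [TopologicalSpace X]

lemma phiNorm_mono (φ : Set ℕ → ℝ≥0∞) (hmono : ∀ A B : Set ℕ, A ⊆ B → φ A ≤ φ B)
    {S T : Set ℕ} (h : S ⊆ T) : phiNorm φ S ≤ phiNorm φ T :=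
  iInf_mono fun n => hmono _ _ (Set.diff_subset_diff_left h)

lemma one_le_phi_diff (φ : Set ℕ → ℝ≥0∞) (h1 : phiNorm φ Set.univ = 1) (n : ℕ) :
    1 ≤ φ (Set.univ \ Set.Iic n) :=
  h1 ▸ iInf_le (fun m => φ (Set.univ \ Set.Iic m)) n

/-- The basic open set used in the Baire-category argument. -/
def Gset (φ : Set ℕ → ℝ≥0∞) (U : Set X) (n : ℕ) (t : ℝ≥0∞) : Set (ℕ → X) :=
  {x | t < φ ({m | x m ∈ U} \ Set.Iic n)}

lemma isOpen_Gset (φ : Set ℕ → ℝ≥0∞) (hφ : IsLSCSM φ) (U : Set X) (hU : IsOpen U)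
    (n : ℕ) (t : ℝ≥0∞) : IsOpen (Gset φ U n t) := by
  obtain ⟨hmono, -, -, hlsc⟩ := hφ
  have heq : Gset φ U n t = ⋃ F ∈ {F : Finset ℕ | (∀ m ∈ F, n < m) ∧ t < φ ↑F},
      {x : ℕ → X | ∀ m ∈ F, x m ∈ U} := by
    ext x
    simp only [Set.mem_iUnion, Set.mem_setOf_eq, Gset, exists_prop]
    constructor
    · intro hx
      rw [hlsc] at hx
      obtain ⟨k, hk⟩ := lt_iSup_iff.mp hx
      have hfin : (({m | x m ∈ U} \ Set.Iic n) ∩ Set.Iic k).Finite :=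
        (Set.finite_Iic k).subset Set.inter_subset_right
      refine ⟨hfin.toFinset, ⟨fun m hm => ?_, ?_⟩, fun m hm => ?_⟩
      · have := (Set.Finite.mem_toFinset hfin).mp hm
        exact not_le.mp (by simpa using this.1.2)
      · rwa [Set.Finite.coe_toFinset]
      · exact ((Set.Finite.mem_toFinset hfin).mp hm).1.1
    · rintro ⟨F, ⟨hFn, hFt⟩, hxF⟩
      refine hFt.trans_le (hmono _ _ ?_)
      intro m hm
      exact ⟨hxF m hm, by simpa using not_le.mpr (hFn m hm)⟩
  rw [heq]
  refine isOpen_biUnion fun F _ => ?_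
  have : {x : ℕ → X | ∀ m ∈ F, x m ∈ U} = ⋂ m ∈ F, (fun x : ℕ → X => x m) ⁻¹' U := by
    ext x; simp
  rw [this]
  exact isOpen_biInter_finset fun m _ => hU.preimage (continuous_apply m)

lemma dense_Gset (φ : Set ℕ → ℝ≥0∞) (hmono : ∀ A B : Set ℕ, A ⊆ B → φ A ≤ φ B)
    (h1 : phiNorm φ Set.univ = 1) (U : Set X) (hU : U.Nonempty)
    (n : ℕ) {t : ℝ≥0∞} (ht : t < 1) : Dense (Gset φ U n t) := by
  classical
  rw [dense_iff_inter_open]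
  rintro V hV ⟨x, hx⟩
  obtain ⟨I, u, hIu, hsub⟩ := isOpen_pi_iff.mp hV x hx
  obtain ⟨u₀, hu₀⟩ := hU
  set N : ℕ := max n (I.sup id) with hN
  set y : ℕ → X := fun m => if m ∈ I then x m else u₀ with hy
  refine ⟨y, hsub fun m hm => ?_, ?_⟩
  · have hmI : m ∈ I := Finset.mem_coe.mp hm
    simp [hy, hmI, (hIu m hmI).2]
  · show t < φ ({m | y m ∈ U} \ Set.Iic n)
    have hsub2 : Set.univ \ Set.Iic N ⊆ {m | y m ∈ U} \ Set.Iic n := by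
      rintro m ⟨-, hm⟩
      have hNm : N < m := not_le.mp (by simpa using hm)
      have hmI : m ∉ I := fun h => absurd (le_max_of_le_right (Finset.le_sup (f := id) h))
        (not_le.mpr hNm)
      refine ⟨by simp [hy, hmI, hu₀], by simpa using not_le.mpr (lt_of_le_of_lt (le_max_left _ _) hNm)⟩
    calc t < 1 := ht
      _ ≤ φ (Set.univ \ Set.Iic N) := one_le_phi_diff φ h1 N
      _ ≤ _ := hmono _ _ hsub2

lemma phiNorm_eq_one_residual (φ : Set ℕ → ℝ≥0∞) (hφ : IsLSCSM φ)
    (h1 : phiNorm φ Set.univ = 1) (U : Set X) (hUo : IsOpen U) (hUne : U.Nonempty) :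
    {x : ℕ → X | phiNorm φ {m | x m ∈ U} = 1} ∈ residual (ℕ → X) := by
  have hmono := hφ.1
  have hsubset : (⋂ n : ℕ, ⋂ k : ℕ, Gset φ U n (1 - ((k : ℝ≥0∞) + 1)⁻¹)) ⊆
      {x : ℕ → X | phiNorm φ {m | x m ∈ U} = 1} := by
    intro x hx
    simp only [Set.mem_iInter] at hx
    have hle : phiNorm φ {m | x m ∈ U} ≤ 1 :=
      h1 ▸ phiNorm_mono φ hmono (Set.subset_univ _)
    refine le_antisymm hle (le_iInf fun n => ?_)
    set a : ℝ≥0∞ := φ ({m | x m ∈ U} \ Set.Iic n) with ha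
    by_contra hlt
    push_neg at hlt
    have haT : a ≠ ⊤ := hlt.ne_top
    have hpos : (0 : ℝ≥0∞) < 1 - a := tsub_pos_of_lt hlt
    obtain ⟨k, hk⟩ := ENNReal.exists_inv_nat_lt hpos.ne'
    have hk1 : ((k : ℝ≥0∞) + 1)⁻¹ < 1 - a := by
      refine lt_of_le_of_lt ?_ hk
      exact ENNReal.inv_le_inv.mpr (by simp)
    have hxk := hx n k
    have hkle1 : ((k : ℝ≥0∞) + 1)⁻¹ ≤ 1 := by
      rw [ENNReal.inv_le_one]
      exact le_add_self
    have h1eq : (1 : ℝ≥0∞) = (1 - ((k : ℝ≥0∞) + 1)⁻¹) + ((k : ℝ≥0∞) + 1)⁻¹ :=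
      (tsub_add_cancel_of_le hkle1).symm
    have hb : a + ((k : ℝ≥0∞) + 1)⁻¹ < a + (1 - a) :=
      ENNReal.add_lt_add_left haT hk1
    have hc : a + (1 - a) = 1 := by
      rw [add_comm]; exact tsub_add_cancel_of_le hlt.le
    have hd : (1 : ℝ≥0∞) < a + ((k : ℝ≥0∞) + 1)⁻¹ := by
      calc (1 : ℝ≥0∞) = (1 - ((k : ℝ≥0∞) + 1)⁻¹) + ((k : ℝ≥0∞) + 1)⁻¹ := h1eq
        _ < a + ((k : ℝ≥0∞) + 1)⁻¹ :=
          ENNReal.add_lt_add_right (show ((k : ℝ≥0∞) + 1)⁻¹ ≠ ⊤ by simp) hxk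
    rw [hc] at hb
    exact absurd (hd.trans hb) (lt_irrefl _)
  refine Filter.mem_of_superset ?_ hsubset
  refine countable_iInter_mem.mpr fun n => ?_
  refine countable_iInter_mem.mpr fun k => ?_
  refine residual_of_dense_open (isOpen_Gset φ hφ U hUo n _)
    (dense_Gset φ hmono h1 U hUne n ?_)
  exact ENNReal.sub_lt_self ENNReal.one_ne_top one_ne_zero (by simp)

end Aux

/-- If `X` is a separable metric space and `φ` is a lscsm with
`‖ω‖_φ = 1`, then the set of `‖·‖_φ`-maldistributed sequences is comeager in `X^ω`. -/
theorem stmt_11 {X : Type*} [MetricSpace X] [TopologicalSpace.SeparableSpace X]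
    (φ : Set ℕ → ℝ≥0∞) (hφ : IsLSCSM φ) (h1 : phiNorm φ Set.univ = 1) :
    {x : ℕ → X | MaldistributedE (phiNorm φ) x} ∈ residual (ℕ → X) := by
  obtain ⟨s, hsc, hsd⟩ := TopologicalSpace.exists_countable_dense X
  have key : ∀ d ∈ s, ∀ k : ℕ,
      {x : ℕ → X | phiNorm φ {m | x m ∈ Metric.ball d (1 / (k + 1))} = 1}
        ∈ residual (ℕ → X) := fun d _ k =>
    phiNorm_eq_one_residual φ hφ h1 _ Metric.isOpen_ball
      ⟨d, Metric.mem_ball_self (by positivity)⟩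
  refine Filter.mem_of_superset
    ((countable_bInter_mem hsc).mpr fun d hd =>
      countable_iInter_mem.mpr fun k => key d hd k) ?_
  intro x hx
  simp only [Set.mem_iInter] at hx
  intro V hVo hVne
  obtain ⟨v, hv⟩ := hVne
  obtain ⟨ε, hε, hball⟩ := Metric.isOpen_iff.mp hVo v hv
  obtain ⟨d, hds, hdv⟩ := Metric.mem_closure_iff.mp (hsd v) (ε / 2) (by positivity)
  obtain ⟨k, hk⟩ := exists_nat_one_div_lt (show (0:ℝ) < ε / 2 by positivity)
  have hsubU : Metric.ball d (1 / (k + 1)) ⊆ V := by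
    intro z hz
    apply hball
    rw [Metric.mem_ball] at hz ⊢
    calc dist z v ≤ dist z d + dist d v := dist_triangle z d v
      _ < 1 / (k + 1) + ε / 2 := by
          rw [dist_comm d v]; exact add_lt_add hz hdv
      _ < ε / 2 + ε / 2 := by linarith
      _ = ε := by ring
  have h1' := hx d hds k
  refine le_antisymm (h1 ▸ phiNorm_mono φ hφ.1 (Set.subset_univ _)) ?_
  calc (1:ℝ≥0∞) = phiNorm φ {m | x m ∈ Metric.ball d (1 / (k + 1))} := h1'.symm
    _ ≤ phiNorm φ {m | x m ∈ V} := phiNorm_mono φ hφ.1 fun m hm => hsubU hm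
end

section
/- Let φ : P(ω) → [0,∞] be a lower semicontinuous submeasure with ‖ω‖_φ = 1, let α ∈ (0,1), and define g : ω → ω by g(n) := min{k ∈ ω : φ([n, n+k]) ≥ 1 − α/4}. Then for every A ⊆ ω with ‖ω∖A‖_φ ≤ 1−α there exists n_A ∈ ω such that φ(A ∩ [n, n+g(n)]) ≥ α/4 (and in particular A ∩ [n, n+g(n)] ≠ ∅) for all n ≥ n_A. -/
open Set

open scoped ENNReal

theorem quarter_quarter' (α : ℝ≥0∞) : α/4 + α/4 = α/2 := by
  rw [ENNReal.div_add_div_same, ← two_mul]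
  have h4 : (4:ℝ≥0∞) = 2 * 2 := by norm_num
  rw [h4, ENNReal.mul_div_mul_left _ _ two_ne_zero ENNReal.ofNat_ne_top]

theorem onesub_lt' (α : ℝ≥0∞) (h0 : α ≠ 0) (h : α < 1) : 1 - α < 1 - α/2 := by
  have hne : α ≠ ⊤ := (h.trans ENNReal.one_lt_top).ne
  have hh : α/2 ≠ ⊤ := (ENNReal.div_lt_top hne (by norm_num)).ne
  have h2 : α/2 + α/2 ≤ 1 := by rw [ENNReal.add_halves]; exact h.le
  have hle : α/2 ≤ 1 - α/2 := ENNReal.le_sub_of_add_le_right hh h2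
  have heq : (1 - α/2 - α/2) + α/2 = 1 - α/2 := tsub_add_cancel_of_le hle
  have h3 : 1 - α = 1 - α/2 - α/2 := by rw [tsub_tsub, ENNReal.add_halves]
  rw [h3]; conv_rhs => rw [← heq]
  exact ENNReal.lt_add_right (ne_top_of_le_ne_top ENNReal.one_ne_top (tsub_le_self.trans tsub_le_self))
    (by simpa using (ENNReal.half_pos h0).ne')

theorem key_eq' (α : ℝ≥0∞) (h : α < 1) : α/4 + (1 - α/2) = 1 - α/4 := by
  have hq4 : α/4 ≠ ⊤ := (ENNReal.div_lt_top (h.trans ENNReal.one_lt_top).ne (by norm_num)).ne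
  have h2 : α/4 + α/4 ≤ 1 := by
    rw [quarter_quarter']
    exact le_trans (ENNReal.half_le_self) h.le
  have hle : α/4 ≤ 1 - α/4 := ENNReal.le_sub_of_add_le_right hq4 h2
  have h3 : 1 - α/2 = 1 - α/4 - α/4 := by rw [tsub_tsub, quarter_quarter']
  rw [h3, add_comm, tsub_add_cancel_of_le hle]

/-- Let `φ` be a lscsm with `‖ω‖_φ = 1`, let `α ∈ (0,1)`, and let
`g(n) := min {k : φ([n, n+k]) ≥ 1 - α/4}`. Then for every `A ⊆ ω` with
`‖ω \ A‖_φ ≤ 1 - α` there is `n_A` such that `φ(A ∩ [n, n + g n]) ≥ α/4` (in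
particular `A ∩ [n, n + g n] ≠ ∅`) for all `n ≥ n_A`. -/
theorem stmt_12 (φ : Set ℕ → ℝ≥0∞) (hφ : IsLSCSM φ) (h1 : phiNorm φ Set.univ = 1)
    (α : ℝ≥0∞) (hα : α ∈ Set.Ioo (0 : ℝ≥0∞) 1)
    (g : ℕ → ℕ) (hg : ∀ n : ℕ, g n = sInf {k : ℕ | 1 - α / 4 ≤ φ (Set.Icc n (n + k))})
    (A : Set ℕ) (hA : phiNorm φ (Set.univ \ A) ≤ 1 - α) :
    ∃ N : ℕ, ∀ n : ℕ, N ≤ n →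
      α / 4 ≤ φ (A ∩ Set.Icc n (n + g n)) ∧ (A ∩ Set.Icc n (n + g n)).Nonempty := by
  obtain ⟨hmono, hsubadd, hfin, hsupax⟩ := hφ
  obtain ⟨hα0, hα1⟩ := hα
  have hαtop : α ≠ ⊤ := (hα1.trans ENNReal.one_lt_top).ne
  have hq0 : α/4 ≠ 0 := (ENNReal.div_pos hα0.ne' (by norm_num)).ne'
  have h1lt : 1 - α/4 < 1 := ENNReal.sub_lt_self ENNReal.one_ne_top one_ne_zero hq0
  have h2top : (1 - α/2 : ℝ≥0∞) ≠ ⊤ := ne_top_of_le_ne_top ENNReal.one_ne_top tsub_le_self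
  have htail : ∀ n, (1:ℝ≥0∞) ≤ φ (Set.univ \ Set.Iic n) := fun n => h1 ▸ iInf_le _ n
  -- the minimum in the definition of g is attained
  have hgprop : ∀ n, 1 - α/4 ≤ φ (Set.Icc n (n + g n)) := by
    intro n
    have hIci : (1:ℝ≥0∞) ≤ φ (Set.Ici n) :=
      le_trans (htail n) (hmono _ _ (by intro x hx; simp at hx ⊢; omega))
    have hlt : 1 - α/4 < ⨆ m, φ (Set.Ici n ∩ Set.Iic m) := by
      rw [← hsupax (Set.Ici n)]; exact lt_of_lt_of_le h1lt hIci
    obtain ⟨m, hm⟩ := lt_iSup_iff.mp hlt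
    have hne : {k : ℕ | 1 - α / 4 ≤ φ (Set.Icc n (n + k))}.Nonempty :=
      ⟨m, le_trans hm.le (hmono _ _ (by intro x hx; simp [Set.mem_Icc] at hx ⊢; omega))⟩
    rw [hg n]; exact Nat.sInf_mem hne
  have hlt2 : phiNorm φ (Set.univ \ A) < 1 - α/2 :=
    lt_of_le_of_lt hA (onesub_lt' α hα0.ne' hα1)
  obtain ⟨N, hN⟩ := iInf_lt_iff.mp hlt2
  refine ⟨N + 1, fun n hn => ?_⟩
  set I := Set.Icc n (n + g n) with hI
  have hsubset : I \ A ⊆ (Set.univ \ A) \ Set.Iic N := by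
    intro x hx
    obtain ⟨⟨hx1, hx2⟩, hx3⟩ := hx
    exact ⟨⟨Set.mem_univ x, hx3⟩, by simp; omega⟩
  have hIA : φ (I \ A) < 1 - α/2 := lt_of_le_of_lt (hmono _ _ hsubset) hN
  have hsplit : φ I ≤ φ (A ∩ I) + φ (I \ A) := by
    refine le_trans (hmono I ((A ∩ I) ∪ (I \ A)) ?_) (hsubadd _ _)
    intro x hx
    by_cases hxA : x ∈ A
    · exact Or.inl ⟨hxA, hx⟩
    · exact Or.inr ⟨hx, hxA⟩
  have hkey : 1 - α/4 ≤ φ (A ∩ I) + (1 - α/2) :=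
    le_trans (hgprop n) (le_trans hsplit (add_le_add_right hIA.le _))
  have hmain : α/4 ≤ φ (A ∩ I) := by
    have heq : α/4 = (1 - α/4) - (1 - α/2) :=
      ENNReal.eq_sub_of_add_eq h2top (key_eq' α hα1)
    rw [heq]
    exact tsub_le_iff_right.mpr hkey
  refine ⟨hmain, ?_⟩
  by_contra hne'
  rw [Set.not_nonempty_iff_eq_empty] at hne'
  have hsub2 : I ⊆ (Set.univ \ A) \ Set.Iic N := by
    intro x hx
    refine ⟨⟨Set.mem_univ x, fun hxA => ?_⟩, ?_⟩
    · exact absurd (Set.mem_inter hxA hx) (hne' ▸ Set.notMem_empty x)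
    · obtain ⟨hx1, hx2⟩ := hx; simp; omega
  have hIlt : φ I < 1 - α/2 := lt_of_le_of_lt (hmono _ _ hsub2) hN
  have hhalf : 1 - α/2 ≤ 1 - α/4 :=
    tsub_le_tsub_left (le_self_add.trans (quarter_quarter' α).le) 1
  exact absurd (hgprop n) (not_le.mpr (lt_of_lt_of_le hIlt hhalf))
end

section
/- Let X := {0,1} with the discrete topology, let I₀ and I₁ be maximal ideals on the even numbers 2ω and the odd numbers 2ω+1 respectively, and define the ideal I := {S ⊆ ω : S ∩ 2ω ∈ I₀ and S ∩ (2ω+1) ∈ I₁} on ω. Then the set Σ_{1_{I⁺}}(X) of 1_{I⁺}-maldistributed sequences is neither meager nor comeager in X^ω. -/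
open Set

/-- The even natural numbers `2ω`. -/
def Evens : Set ℕ := {n : ℕ | Even n}

/-- The odd natural numbers `2ω + 1`. -/
def Odds : Set ℕ := {n : ℕ | ¬ Even n}

/-- `J` is a maximal ideal on the (infinite) set `D ⊆ ω`: it is the complement in
`P(D)` of a free ultrafilter on `D`.  We encode an ultrafilter on `D` as an
ultrafilter `𝒰` on `ℕ` containing `D`; freeness means `𝒰` extends the cofinite
filter. -/
def IsMaxIdealOn (D : Set ℕ) (J : Set (Set ℕ)) : Prop :=
  ∃ 𝒰 : Ultrafilter ℕ, D ∈ 𝒰 ∧ (𝒰 : Filter ℕ) ≤ Filter.cofinite ∧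
    J = {S : Set ℕ | S ⊆ D ∧ S ∉ 𝒰}

/-- The restriction of `x` to the index set `D` is `J`-convergent to `η`:
for every open neighborhood `U` of `η`, the set `{n ∈ D : x n ∉ U}` is in `J`. -/
def IConvOn {X : Type*} [TopologicalSpace X] (D : Set ℕ) (J : Set (Set ℕ))
    (x : ℕ → X) (η : X) : Prop :=
  ∀ U : Set X, IsOpen U → η ∈ U → {n : ℕ | n ∈ D ∧ x n ∉ U} ∈ J

/-- The set `S_{i,j}` of sequences in `X^ω = (ℕ → Bool)` whose restriction to the evens
is `I₀`-convergent to `i` and whose restriction to the odds is `I₁`-convergent to `j`.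
Here `X = {0,1}` is the discrete two-point space, realized as `Bool`
(`false ↔ 0`, `true ↔ 1`). -/
def Sij (I₀ I₁ : Set (Set ℕ)) (i j : Bool) : Set (ℕ → Bool) :=
  {x : ℕ → Bool | IConvOn Evens I₀ x i ∧ IConvOn Odds I₁ x j}


lemma flip_mem {𝒰 : Ultrafilter ℕ} {D : Set ℕ} (hD : D ∈ 𝒰) (f : ℕ → Bool) :
    {n | n ∈ D ∧ f n = true} ∈ 𝒰 ↔ {n | n ∈ D ∧ f n = false} ∉ 𝒰 := by
  constructor
  · intro h h'
    have : {n | n ∈ D ∧ f n = true} ∩ {n | n ∈ D ∧ f n = false} ∈ 𝒰 :=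
      Filter.inter_mem h h'
    have he : {n | n ∈ D ∧ f n = true} ∩ {n | n ∈ D ∧ f n = false} = (∅ : Set ℕ) := by
      ext n; simp only [mem_inter_iff, mem_setOf_eq, mem_empty_iff_false, iff_false]
      rintro ⟨⟨-, h1⟩, ⟨-, h2⟩⟩; rw [h1] at h2; simp at h2
    rw [he] at this
    exact (Filter.empty_notMem (𝒰 : Filter ℕ)) this
  · intro h
    have hsub : D ⊆ {n | n ∈ D ∧ f n = true} ∪ {n | n ∈ D ∧ f n = false} := by
      intro n hn
      rcases Bool.eq_false_or_eq_true (f n) with h' | h'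
      · exact Or.inl ⟨hn, h'⟩
      · exact Or.inr ⟨hn, h'⟩
    have := Filter.mem_of_superset hD hsub
    rcases (Ultrafilter.union_mem_iff).mp this with h' | h'
    · exact h'
    · exact absurd h' h

lemma maldist_iff (I : Set (Set ℕ)) (x : ℕ → Bool) :
    Maldistributed (nuInd I) x ↔
      ({n : ℕ | x n = true} ∉ I ∧ {n : ℕ | x n = false} ∉ I ∧ (univ : Set ℕ) ∉ I) := by
  have key : ∀ S : Set ℕ, nuInd I S = 1 ↔ S ∉ I := by
    intro S
    unfold nuInd
    split
    · simp_all
    · simp_all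
  constructor
  · intro h
    refine ⟨?_, ?_, ?_⟩
    · have := h {true} (isOpen_discrete _) ⟨true, rfl⟩
      rw [key] at this; simpa using this
    · have := h {false} (isOpen_discrete _) ⟨false, rfl⟩
      rw [key] at this; simpa using this
    · have := h univ isOpen_univ ⟨true, trivial⟩
      rw [key] at this; simpa using this
  · rintro ⟨hT, hF, hU⟩ U hUo ⟨b, hb⟩
    rw [key]
    by_cases ht : true ∈ U <;> by_cases hf : false ∈ U
    · have : {n : ℕ | x n ∈ U} = univ := by
        ext n; simp only [mem_setOf_eq, mem_univ, iff_true]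
        cases x n <;> assumption
      rwa [this]
    · have : {n : ℕ | x n ∈ U} = {n : ℕ | x n = true} := by
        ext n; simp only [mem_setOf_eq]
        cases h : x n <;> simp_all
      rwa [this]
    · have : {n : ℕ | x n ∈ U} = {n : ℕ | x n = false} := by
        ext n; simp only [mem_setOf_eq]
        cases h : x n <;> simp_all
      rwa [this]
    · exfalso; cases b <;> simp_all

/-- With `X = {0,1}` discrete (realized as `Bool`), `I₀, I₁` maximal
ideals on the evens and the odds respectively, and
`I = {S ⊆ ω : S ∩ 2ω ∈ I₀ and S ∩ (2ω+1) ∈ I₁}`, the set of `1_{I⁺}`-maldistributed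
sequences is neither meager nor comeager in `X^ω`. -/
theorem stmt_15 (I₀ I₁ : Set (Set ℕ))
    (h₀ : IsMaxIdealOn Evens I₀) (h₁ : IsMaxIdealOn Odds I₁)
    (I : Set (Set ℕ))
    (hI : I = {S : Set ℕ | S ∩ Evens ∈ I₀ ∧ S ∩ Odds ∈ I₁}) :
    ¬ IsMeagre {x : ℕ → Bool | Maldistributed (nuInd I) x} ∧
    {x : ℕ → Bool | Maldistributed (nuInd I) x} ∉ residual (ℕ → Bool) := by
  obtain ⟨𝒰₀, hE0, -, hI0⟩ := h₀
  obtain ⟨𝒰₁, hO1, -, hI1⟩ := h₁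
  set M := {x : ℕ → Bool | Maldistributed (nuInd I) x} with hM
  -- membership in I
  have memI : ∀ S : Set ℕ, S ∈ I ↔ (S ∩ Evens ∉ 𝒰₀ ∧ S ∩ Odds ∉ 𝒰₁) := by
    intro S
    rw [hI, hI0, hI1]
    simp only [mem_setOf_eq]
    constructor
    · rintro ⟨⟨-, h1⟩, ⟨-, h2⟩⟩; exact ⟨h1, h2⟩
    · rintro ⟨h1, h2⟩; exact ⟨⟨inter_subset_right, h1⟩, ⟨inter_subset_right, h2⟩⟩
  -- abbreviations
  set p : (ℕ → Bool) → Prop := fun x => {n : ℕ | n ∈ Evens ∧ x n = true} ∈ 𝒰₀ with hp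
  set q : (ℕ → Bool) → Prop := fun x => {n : ℕ | n ∈ Odds ∧ x n = true} ∈ 𝒰₁ with hq
  have interE : ∀ (x : ℕ → Bool) (b : Bool),
      {n : ℕ | x n = b} ∩ Evens = {n : ℕ | n ∈ Evens ∧ x n = b} := by
    intro x b; ext n; simp [and_comm]
  have interO : ∀ (x : ℕ → Bool) (b : Bool),
      {n : ℕ | x n = b} ∩ Odds = {n : ℕ | n ∈ Odds ∧ x n = b} := by
    intro x b; ext n; simp [and_comm]
  -- characterization of maldistribution
  have char : ∀ x : ℕ → Bool, x ∈ M ↔ ¬ (p x ↔ q x) := by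
    intro x
    rw [hM, mem_setOf_eq, maldist_iff]
    have hT : {n : ℕ | x n = true} ∉ I ↔ (p x ∨ q x) := by
      rw [memI, interE, interO]
      tauto
    have hF : {n : ℕ | x n = false} ∉ I ↔ (¬ p x ∨ ¬ q x) := by
      rw [memI, interE, interO]
      have e0 : {n : ℕ | n ∈ Evens ∧ x n = false} ∈ 𝒰₀ ↔ ¬ p x := by
        rw [hp]; simp only []
        constructor
        · intro h hp'; exact ((flip_mem hE0 x).mp hp') h
        · intro h; by_contra h'; exact h ((flip_mem hE0 x).mpr h')
      have e1 : {n : ℕ | n ∈ Odds ∧ x n = false} ∈ 𝒰₁ ↔ ¬ q x := by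
        rw [hq]; simp only []
        constructor
        · intro h hq'; exact ((flip_mem hO1 x).mp hq') h
        · intro h; by_contra h'; exact h ((flip_mem hO1 x).mpr h')
      constructor
      · intro h
        by_cases h0 : {n : ℕ | n ∈ Evens ∧ x n = false} ∈ 𝒰₀
        · exact Or.inl (e0.mp h0)
        · by_cases h1 : {n : ℕ | n ∈ Odds ∧ x n = false} ∈ 𝒰₁
          · exact Or.inr (e1.mp h1)
          · exact absurd ⟨h0, h1⟩ h
      · rintro (h | h) ⟨h0, h1⟩
        · exact h (e0.not.mp h0 |> not_not.mp)
        · exact h (e1.not.mp h1 |> not_not.mp)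
    have hUniv : (univ : Set ℕ) ∉ I := by
      rw [memI, univ_inter]
      rintro ⟨h1, -⟩; exact h1 hE0
    rw [hT, hF]
    constructor
    · rintro ⟨h1, h2, -⟩; tauto
    · intro h; refine ⟨?_, ?_, hUniv⟩ <;> tauto
  -- the flip homeomorphism on even coordinates
  set σ : (ℕ → Bool) → (ℕ → Bool) := fun x n => if Even n then ! (x n) else x n with hσ
  have σinv : Function.Involutive σ := by
    intro x; funext n; rw [hσ]; simp only []
    by_cases h : Even n <;> simp [h]
  have σcont : Continuous σ := by
    apply continuous_pi
    intro n
    by_cases h : Even n <;> simp only [hσ, h, if_true, if_false]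
    · exact Continuous.comp (continuous_of_discreteTopology : Continuous Bool.not) (continuous_apply n)
    · exact continuous_apply n
  have σhomeo : IsOpenMap σ := by
    have : σ ∘ σ = id := funext σinv
    intro U hU
    have : σ '' U = σ ⁻¹' U := by
      ext y; constructor
      · rintro ⟨z, hz, rfl⟩; simpa [σinv z] using hz
      · intro hy; exact ⟨σ y, hy, σinv y⟩
    rw [this]; exact hU.preimage σcont
  -- σ swaps M and its complement
  have pσ : ∀ x, p (σ x) ↔ ¬ p x := by
    intro x
    have : {n : ℕ | n ∈ Evens ∧ σ x n = true} = {n : ℕ | n ∈ Evens ∧ x n = false} := by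
      ext n; simp only [mem_setOf_eq, hσ]
      constructor
      · rintro ⟨hn, h⟩
        refine ⟨hn, ?_⟩
        rw [if_pos (show Even n from hn)] at h
        cases hxn : x n
        · rfl
        · rw [hxn] at h; simp at h
      · rintro ⟨hn, h⟩
        exact ⟨hn, by rw [if_pos (show Even n from hn), h]; rfl⟩
    rw [hp]; simp only []
    rw [this]
    constructor
    · intro h hp'; exact ((flip_mem hE0 x).mp hp') h
    · intro h; by_contra h'; exact h ((flip_mem hE0 x).mpr h')
  have qσ : ∀ x, q (σ x) ↔ q x := by
    intro x
    have : {n : ℕ | n ∈ Odds ∧ σ x n = true} = {n : ℕ | n ∈ Odds ∧ x n = true} := by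
      ext n; simp only [mem_setOf_eq, hσ]
      constructor
      · rintro ⟨hn, h⟩
        rw [if_neg (show ¬ Even n from hn)] at h
        exact ⟨hn, h⟩
      · rintro ⟨hn, h⟩
        exact ⟨hn, by rw [if_neg (show ¬ Even n from hn)]; exact h⟩
    rw [hq]; simp only []
    rw [this]
  have preM : σ ⁻¹' M = Mᶜ := by
    ext x
    rw [mem_preimage, char, mem_compl_iff, char, pσ, qσ]
    tauto
  -- if M is meagre then so is its complement, hence univ, contradiction
  have univ_not_meagre : ¬ IsMeagre (univ : Set (ℕ → Bool)) := by
    intro h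
    rw [IsMeagre, compl_univ] at h
    have := dense_of_mem_residual h
    rcases this.nonempty with ⟨y, hy⟩
    exact hy
  have hMne : ¬ IsMeagre M := by
    intro h
    have h2 : IsMeagre (σ ⁻¹' M) := h.preimage_of_isOpenMap σcont σhomeo
    rw [preM] at h2
    have : IsMeagre (M ∪ Mᶜ) := by
      rw [IsMeagre, compl_union]
      exact Filter.inter_mem h h2
    rw [union_compl_self] at this
    exact univ_not_meagre this
  have hMcne : ¬ IsMeagre Mᶜ := by
    intro h
    have h2 : IsMeagre (σ ⁻¹' Mᶜ) := h.preimage_of_isOpenMap σcont σhomeo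
    have : σ ⁻¹' Mᶜ = M := by
      rw [preimage_compl, preM, compl_compl]
    rw [this] at h2
    exact hMne h2
  refine ⟨hMne, ?_⟩
  intro h
  exact hMcne (by rwa [IsMeagre, compl_compl])
end

section
/- Let X := {0,1} with the discrete topology, let I₀ and I₁ be maximal ideals on the even numbers 2ω and the odd numbers 2ω+1 respectively, define the ideal I := {S ⊆ ω : S ∩ 2ω ∈ I₀ and S ∩ (2ω+1) ∈ I₁} on ω, and for i,j ∈ {0,1} define S_{i,j} := {x ∈ X^ω : (x restricted to 2ω) is I₀-convergent to i and (x restricted to 2ω+1) is I₁-convergent to j}. Then Σ_{1_{I⁺}}(X) = S_{0,1} ∪ S_{1,0}. -/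
open Set

lemma iconv_iff {x : ℕ → Bool} {D : Set ℕ} {𝒰 : Ultrafilter ℕ} (hD : D ∈ 𝒰) (b : Bool) :
    IConvOn D {S : Set ℕ | S ⊆ D ∧ S ∉ 𝒰} x b ↔ {n : ℕ | x n = b} ∈ 𝒰 := by
  constructor
  · intro h
    have h1 := h {b} (isOpen_discrete _) rfl
    have h2 : {n : ℕ | n ∈ D ∧ x n ∉ ({b} : Set Bool)}ᶜ ∈ 𝒰 :=
      (Ultrafilter.compl_mem_iff_notMem).2 h1.2
    have h3 : D ∩ {n : ℕ | n ∈ D ∧ x n ∉ ({b} : Set Bool)}ᶜ ∈ 𝒰 := Filter.inter_mem hD h2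
    refine Filter.mem_of_superset h3 ?_
    rintro n ⟨hnD, hn⟩
    simp only [Set.mem_compl_iff, Set.mem_setOf_eq, Set.mem_singleton_iff, not_and, not_not] at hn
    exact hn hnD
  · intro h U hU hbU
    refine ⟨fun n hn => hn.1, ?_⟩
    intro hmem
    have h2 : {n : ℕ | x n = b} ∩ {n : ℕ | n ∈ D ∧ x n ∉ U} ∈ 𝒰 := Filter.inter_mem h hmem
    obtain ⟨n, hn1, hn2⟩ := Filter.nonempty_of_mem h2
    exact hn2.2 (hn1 ▸ hbU)

/-- With `X = {0,1}` discrete (realized as `Bool`), `I₀, I₁` maximal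
ideals on the evens and the odds, and `I = {S : S ∩ 2ω ∈ I₀ and S ∩ (2ω+1) ∈ I₁}`,
the set of `1_{I⁺}`-maldistributed sequences equals `S_{0,1} ∪ S_{1,0}`. -/
theorem stmt_17 (I₀ I₁ : Set (Set ℕ))
    (h₀ : IsMaxIdealOn Evens I₀) (h₁ : IsMaxIdealOn Odds I₁)
    (I : Set (Set ℕ))
    (hI : I = {S : Set ℕ | S ∩ Evens ∈ I₀ ∧ S ∩ Odds ∈ I₁}) :
    {x : ℕ → Bool | Maldistributed (nuInd I) x} =
      Sij I₀ I₁ false true ∪ Sij I₀ I₁ true false := by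
  subst hI
  obtain ⟨𝒰₀, hE, -, rfl⟩ := h₀
  obtain ⟨𝒰₁, hO, -, rfl⟩ := h₁
  ext x
  set I' : Set (Set ℕ) :=
    {S : Set ℕ | S ∩ Evens ∈ {S : Set ℕ | S ⊆ Evens ∧ S ∉ 𝒰₀} ∧
      S ∩ Odds ∈ {S : Set ℕ | S ⊆ Odds ∧ S ∉ 𝒰₁}} with hI'
  have hmemI : ∀ S : Set ℕ, S ∉ I' ↔ (S ∩ Evens ∈ 𝒰₀ ∨ S ∩ Odds ∈ 𝒰₁) := by
    intro S
    have : S ∈ I' ↔ (S ∩ Evens ∉ 𝒰₀ ∧ S ∩ Odds ∉ 𝒰₁) := by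
      simp [hI', Set.inter_subset_right]
    rw [this]; tauto
  have hEint : ∀ S : Set ℕ, S ∩ Evens ∈ 𝒰₀ ↔ S ∈ 𝒰₀ := fun S =>
    ⟨fun h => Filter.mem_of_superset h Set.inter_subset_left,
     fun h => Filter.inter_mem h hE⟩
  have hOint : ∀ S : Set ℕ, S ∩ Odds ∈ 𝒰₁ ↔ S ∈ 𝒰₁ := fun S =>
    ⟨fun h => Filter.mem_of_superset h Set.inter_subset_left,
     fun h => Filter.inter_mem h hO⟩
  have hcompl : {n : ℕ | x n = false} = {n : ℕ | x n = true}ᶜ := by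
    ext n; simp
  have hdown : ∀ S T : Set ℕ, S ⊆ T → T ∈ I' → S ∈ I' := by
    intro S T hST ⟨hT1, hT2⟩
    constructor
    · exact ⟨Set.inter_subset_right, fun h => hT1.2 (Filter.mem_of_superset h
        (Set.inter_subset_inter_left _ hST))⟩
    · exact ⟨Set.inter_subset_right, fun h => hT2.2 (Filter.mem_of_superset h
        (Set.inter_subset_inter_left _ hST))⟩
  have hval : ∀ S : Set ℕ, nuInd I' S = 1 ↔ S ∉ I' := by
    intro S
    unfold nuInd
    by_cases h : S ∈ I' <;> simp [h]
  have hmal : Maldistributed (nuInd I') x ↔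
      ({n : ℕ | x n = false} ∉ I' ∧ {n : ℕ | x n = true} ∉ I') := by
    constructor
    · intro h
      constructor
      · have := h {false} (isOpen_discrete _) ⟨false, rfl⟩
        exact (hval _).1 this
      · have := h {true} (isOpen_discrete _) ⟨true, rfl⟩
        exact (hval _).1 this
    · rintro ⟨hf, ht⟩ U hU ⟨b, hb⟩
      rw [hval]
      intro hmem
      have hsub : {n : ℕ | x n = b} ⊆ {n : ℕ | x n ∈ U} := fun n hn => by rw [Set.mem_setOf_eq] at hn ⊢; rw [hn]; exact hb
      cases b
      · exact hf (hdown _ _ hsub hmem)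
      · exact ht (hdown _ _ hsub hmem)
  simp only [Set.mem_setOf_eq, Set.mem_union, Sij, hmal]
  rw [iconv_iff hE false, iconv_iff hO true, iconv_iff hE true, iconv_iff hO false,
    hmemI, hmemI, hEint, hOint, hEint, hOint, hcompl,
    Ultrafilter.compl_mem_iff_notMem, Ultrafilter.compl_mem_iff_notMem]
  tauto
end
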